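/- arXiv:2006.14818 — 4 statements merged into one kernel-verified Lean document; each statement's English description precedes it below -/
import Mathlib

section
/- In the multivariate linear EIV model under assumptions (i)-(iv), the error u in the representation y = b_x + C^T z + B_x^T x + u satisfies Cov(u) = Σ_e + Cov(B^T γ1 + γ2), where (γ1^T, γ2^T)^T ~ N(0, V) with V = Σ11 − Σ12 Σ22^{-1} Σ12^T; in particular, if either Σ_e is positive definite or V is positive definite, then Cov(u) is positive definite. -/
open MeasureTheory ProbabilityTheory Matrix
open scoped NNReal

noncomputable section

def vmean {Ω : Type*} [MeasurableSpace Ω] (P : Measure Ω) {n : ℕ}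
    (X : Ω → Fin n → ℝ) : Fin n → ℝ :=
  fun i => ∫ ω, X ω i ∂P

def vcov {Ω : Type*} [MeasurableSpace Ω] (P : Measure Ω) {n m : ℕ}
    (X : Ω → Fin n → ℝ) (Y : Ω → Fin m → ℝ) : Matrix (Fin n) (Fin m) ℝ :=
  Matrix.of fun i j =>
    ∫ ω, (X ω i - vmean P X i) * (Y ω j - vmean P Y j) ∂P

def IsGaussianVec {Ω : Type*} [MeasurableSpace Ω] (P : Measure Ω) {n : ℕ}
    (X : Ω → Fin n → ℝ) : Prop :=
  ∀ l : Fin n → ℝ, ∃ (m : ℝ) (v : ℝ≥0),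
    Measure.map (fun ω => ∑ i, l i * X ω i) P = gaussianReal m v

/-!
Since `x = ξ + δ`, the representation error is `u = e + Bᵀ γ₁ + γ₂ = e + [Bᵀ I] γ`, where
`γ = (γ₁, γ₂)` is the residual of `(ξ, ε)` after linear regression on `x`. Independence makes `e`
uncorrelated with `ξ`, `ε`, `δ`, hence with `γ`, so `Cov(u) = Σ_e + [Bᵀ I] Cov(γ) [Bᵀ I]ᵀ`. The
covariance of a regression residual is the Schur complement `Σ₁₁ − Σ₁₂ Σ₂₂⁻¹ Σ₁₂ᵀ = V`, and since
`[Bᵀ I]` has full row rank, `[Bᵀ I] V [Bᵀ I]ᵀ` is positive definite as soon as `V` is.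
-/

lemma vecMul_fromCols_one_injective {R m n : Type*} [Semiring R] [Fintype m] [DecidableEq m]
    (A : Matrix m n R) : Function.Injective (fromCols A (1 : Matrix m m R)).vecMul := by
  intro v w h
  simpa using congrArg (· ∘ Sum.inr) h

lemma posDef_add_mul_mul_transpose {m n : Type*} [Fintype m] [Fintype n] {A : Matrix m m ℝ}
    {V : Matrix n n ℝ} {M : Matrix m n ℝ} (hA : A.PosSemidef) (hV : V.PosSemidef)
    (hM : Function.Injective M.vecMul) (h : A.PosDef ∨ V.PosDef) :
    (A + M * V * Mᵀ).PosDef := by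
  rw [← conjTranspose_eq_transpose_of_trivial]
  rcases h with hA' | hV'
  · exact hA'.add_posSemidef (hV.mul_mul_conjTranspose_same M)
  · exact PosDef.posSemidef_add hA (hV'.mul_mul_conjTranspose_same hM)

section CrossCov

variable {Ω ι κ ι' κ' : Type*} [MeasurableSpace Ω] {P : Measure Ω}

def crossCov (P : Measure Ω) (X : Ω → ι → ℝ) (Y : Ω → κ → ℝ) : Matrix ι κ ℝ :=
  .of fun i j => cov[fun ω => X ω i, fun ω => Y ω j; P]

lemma vcov_eq_crossCov {n p : ℕ} (X : Ω → Fin n → ℝ) (Y : Ω → Fin p → ℝ) :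
    vcov P X Y = crossCov P X Y := rfl

lemma transpose_crossCov (X : Ω → ι → ℝ) (Y : Ω → κ → ℝ) :
    (crossCov P X Y)ᵀ = crossCov P Y X := by
  ext i j
  exact covariance_comm _ _

lemma isHermitian_crossCov_self (X : Ω → ι → ℝ) : (crossCov P X X).IsHermitian := by
  rw [IsHermitian, conjTranspose_eq_transpose_of_trivial, transpose_crossCov]

lemma crossCov_sumElim_left (X : Ω → ι → ℝ) (X' : Ω → ι' → ℝ) (Y : Ω → κ → ℝ) :
    crossCov P (fun ω => Sum.elim (X ω) (X' ω)) Y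
      = fromRows (crossCov P X Y) (crossCov P X' Y) := by
  ext (i | i) j <;> rfl

lemma crossCov_sumElim_right (X : Ω → ι → ℝ) (Y : Ω → κ → ℝ) (Y' : Ω → κ' → ℝ) :
    crossCov P X (fun ω => Sum.elim (Y ω) (Y' ω))
      = fromCols (crossCov P X Y) (crossCov P X Y') := by
  ext i (j | j) <;> rfl

lemma ProbabilityTheory.IndepFun.crossCov_eq_zero {X : Ω → ι → ℝ} {Y : Ω → κ → ℝ}
    (h : IndepFun X Y P) (hX : ∀ i, MemLp (fun ω => X ω i) 2 P)
    (hY : ∀ j, MemLp (fun ω => Y ω j) 2 P) :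
    crossCov P X Y = 0 := by
  ext i j
  exact (h.comp (measurable_pi_apply i) (measurable_pi_apply j)).covariance_eq_zero (hX i) (hY j)

lemma crossCov_sumElim_self_of_indepFun {X : Ω → ι → ℝ} {Y : Ω → κ → ℝ} (h : IndepFun X Y P)
    (hX : ∀ i, MemLp (fun ω => X ω i) 2 P) (hY : ∀ j, MemLp (fun ω => Y ω j) 2 P) :
    crossCov P (fun ω => Sum.elim (X ω) (Y ω)) (fun ω => Sum.elim (X ω) (Y ω))
      = fromBlocks (crossCov P X X) 0 0 (crossCov P Y Y) := by
  rw [crossCov_sumElim_left, crossCov_sumElim_right, crossCov_sumElim_right,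
    h.crossCov_eq_zero hX hY, h.symm.crossCov_eq_zero hY hX, fromRows_fromCols_eq_fromBlocks]

lemma memLp_mulVec [Fintype ι] {X : Ω → ι → ℝ} (hX : ∀ i, MemLp (fun ω => X ω i) 2 P)
    (A : Matrix κ ι ℝ) (k : κ) : MemLp (fun ω => (A *ᵥ X ω) k) 2 P :=
  memLp_finsetSum _ fun i _ => (hX i).const_mul (A k i)

section FiniteMeasure

variable [IsFiniteMeasure P]

lemma crossCov_add_left {X X' : Ω → ι → ℝ} {Y : Ω → κ → ℝ}
    (hX : ∀ i, MemLp (fun ω => X ω i) 2 P) (hX' : ∀ i, MemLp (fun ω => X' ω i) 2 P)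
    (hY : ∀ j, MemLp (fun ω => Y ω j) 2 P) :
    crossCov P (fun ω => X ω + X' ω) Y = crossCov P X Y + crossCov P X' Y := by
  ext i j
  exact covariance_add_left (hX i) (hX' i) (hY j)

lemma crossCov_add_right {X : Ω → ι → ℝ} {Y Y' : Ω → κ → ℝ}
    (hX : ∀ i, MemLp (fun ω => X ω i) 2 P) (hY : ∀ j, MemLp (fun ω => Y ω j) 2 P)
    (hY' : ∀ j, MemLp (fun ω => Y' ω j) 2 P) :
    crossCov P X (fun ω => Y ω + Y' ω) = crossCov P X Y + crossCov P X Y' := by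
  ext i j
  exact covariance_add_right (hX i) (hY j) (hY' j)

lemma crossCov_sub_left {X X' : Ω → ι → ℝ} {Y : Ω → κ → ℝ}
    (hX : ∀ i, MemLp (fun ω => X ω i) 2 P) (hX' : ∀ i, MemLp (fun ω => X' ω i) 2 P)
    (hY : ∀ j, MemLp (fun ω => Y ω j) 2 P) :
    crossCov P (fun ω => X ω - X' ω) Y = crossCov P X Y - crossCov P X' Y := by
  ext i j
  exact covariance_sub_left (hX i) (hX' i) (hY j)

lemma crossCov_add_self {X Y : Ω → ι → ℝ} (hX : ∀ i, MemLp (fun ω => X ω i) 2 P)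
    (hY : ∀ i, MemLp (fun ω => Y ω i) 2 P) (hXY : crossCov P X Y = 0) :
    crossCov P (fun ω => X ω + Y ω) (fun ω => X ω + Y ω) = crossCov P X X + crossCov P Y Y := by
  rw [crossCov_add_left (Y := fun ω => X ω + Y ω) hX hY fun i => (hX i).add (hY i),
    crossCov_add_right hX hX hY, crossCov_add_right hY hX hY, ← transpose_crossCov X Y, hXY,
    transpose_zero, add_zero, zero_add]

lemma crossCov_mulVec_left [Fintype ι] {X : Ω → ι → ℝ} {Y : Ω → κ → ℝ}
    (hX : ∀ i, MemLp (fun ω => X ω i) 2 P) (hY : ∀ j, MemLp (fun ω => Y ω j) 2 P)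
    (A : Matrix ι' ι ℝ) :
    crossCov P (fun ω => A *ᵥ X ω) Y = A * crossCov P X Y := by
  ext k j
  simp only [crossCov, of_apply, mul_apply, mulVec, dotProduct]
  rw [covariance_fun_sum_left (fun i => (hX i).const_mul (A k i)) (hY j)]
  simp_rw [covariance_const_mul_left]

lemma crossCov_mulVec_right [Fintype κ] {X : Ω → ι → ℝ} {Y : Ω → κ → ℝ}
    (hX : ∀ i, MemLp (fun ω => X ω i) 2 P) (hY : ∀ j, MemLp (fun ω => Y ω j) 2 P)
    (A : Matrix κ' κ ℝ) :
    crossCov P X (fun ω => A *ᵥ Y ω) = crossCov P X Y * Aᵀ := by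
  rw [← transpose_crossCov, crossCov_mulVec_left hY hX, transpose_mul, transpose_crossCov]

lemma crossCov_mulVec_mulVec [Fintype ι] [Fintype κ] {X : Ω → ι → ℝ} {Y : Ω → κ → ℝ}
    (hX : ∀ i, MemLp (fun ω => X ω i) 2 P) (hY : ∀ j, MemLp (fun ω => Y ω j) 2 P)
    (A : Matrix ι' ι ℝ) (B : Matrix κ' κ ℝ) :
    crossCov P (fun ω => A *ᵥ X ω) (fun ω => B *ᵥ Y ω) = A * crossCov P X Y * Bᵀ := by
  rw [crossCov_mulVec_left hX (memLp_mulVec hY B), crossCov_mulVec_right hX hY, Matrix.mul_assoc]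

lemma posSemidef_crossCov_self [Fintype ι] {X : Ω → ι → ℝ}
    (hX : ∀ i, MemLp (fun ω => X ω i) 2 P) : (crossCov P X X).PosSemidef := by
  refine posSemidef_iff_dotProduct_mulVec.mpr ⟨isHermitian_crossCov_self X, fun a => ?_⟩
  have hX' : ∀ i, MemLp (fun ω => a i * X ω i) 2 P := fun i => (hX i).const_mul (a i)
  have hquad : star a ⬝ᵥ crossCov P X X *ᵥ a
      = cov[fun ω => ∑ i, a i * X ω i, fun ω => ∑ j, a j * X ω j; P] := by
    rw [covariance_fun_sum_fun_sum hX' hX']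
    simp only [star_trivial, dotProduct, mulVec, Finset.mul_sum, crossCov, of_apply,
      covariance_const_mul_left, covariance_const_mul_right]
    exact Finset.sum_congr rfl fun i _ => Finset.sum_congr rfl fun j _ => by ring
  rw [hquad, covariance_self (memLp_finsetSum _ fun i _ => hX' i).aemeasurable]
  exact variance_nonneg _ _

lemma crossCov_sumElim_add_of_indepFun {ξ δ : Ω → ι → ℝ} {ε : Ω → κ → ℝ}
    (hξε : IndepFun ξ ε P) (hξδ : IndepFun ξ δ P) (hξ : ∀ i, MemLp (fun ω => ξ ω i) 2 P)
    (hε : ∀ j, MemLp (fun ω => ε ω j) 2 P) (hδ : ∀ i, MemLp (fun ω => δ ω i) 2 P) :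
    crossCov P (fun ω => Sum.elim (ξ ω) (ε ω)) (fun ω => ξ ω + δ ω)
      = fromRows (crossCov P ξ ξ) (crossCov P ε δ) := by
  rw [crossCov_sumElim_left, crossCov_add_right hξ hξ hδ, crossCov_add_right hε hξ hδ,
    hξδ.crossCov_eq_zero hξ hδ, hξε.symm.crossCov_eq_zero hε hξ, add_zero, zero_add]

end FiniteMeasure

section ProbabilityMeasure

variable [IsProbabilityMeasure P]

lemma crossCov_apply_of_integral_eq_zero_left {X : Ω → ι → ℝ} {Y : Ω → κ → ℝ} {i : ι} {j : κ}
    (hX : MemLp (fun ω => X ω i) 2 P) (hY : MemLp (fun ω => Y ω j) 2 P)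
    (h0 : ∫ ω, X ω i ∂P = 0) :
    crossCov P X Y i j = ∫ ω, X ω i * Y ω j ∂P := by
  rw [crossCov, of_apply, covariance_eq_sub hX hY, h0, zero_mul, sub_zero]
  rfl

lemma crossCov_affine_left [Fintype ι] {X : Ω → ι → ℝ} {Y : Ω → κ → ℝ}
    (hX : ∀ i, MemLp (fun ω => X ω i) 2 P) (hY : ∀ j, MemLp (fun ω => Y ω j) 2 P)
    (c : ι' → ℝ) (A : Matrix ι' ι ℝ) :
    crossCov P (fun ω => c + A *ᵥ X ω) Y = A * crossCov P X Y := by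
  rw [← crossCov_mulVec_left hX hY A]
  ext k j
  exact covariance_const_add_left ((memLp_mulVec hX A k).integrable one_le_two) (c k)

lemma crossCov_sub_affine_left [Fintype ι] {W : Ω → ι' → ℝ} {X : Ω → ι → ℝ} {Y : Ω → κ → ℝ}
    (hW : ∀ i, MemLp (fun ω => W ω i) 2 P) (hX : ∀ i, MemLp (fun ω => X ω i) 2 P)
    (hY : ∀ j, MemLp (fun ω => Y ω j) 2 P) (c : ι' → ℝ) (A : Matrix ι' ι ℝ) :
    crossCov P (fun ω => W ω - (c + A *ᵥ X ω)) Y = crossCov P W Y - A * crossCov P X Y := by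
  rw [crossCov_sub_left (X' := fun ω => c + A *ᵥ X ω) hW
    (fun k => (memLp_const (c k)).add (memLp_mulVec hX A k)) hY, crossCov_affine_left hX hY]

end ProbabilityMeasure

section LinearResidual

variable [Fintype κ] [DecidableEq κ]

/-- The intercept `c` is left arbitrary: covariances do not depend on it. -/
def linearResidual (P : Measure Ω) (W : Ω → ι → ℝ) (X : Ω → κ → ℝ) (c : ι → ℝ) :
    Ω → ι → ℝ :=
  fun ω => W ω - (c + (crossCov P W X * (crossCov P X X)⁻¹) *ᵥ X ω)

variable [IsProbabilityMeasure P] {W : Ω → ι → ℝ} {X : Ω → κ → ℝ}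

lemma memLp_linearResidual (hW : ∀ i, MemLp (fun ω => W ω i) 2 P)
    (hX : ∀ k, MemLp (fun ω => X ω k) 2 P) (c : ι → ℝ) (i : ι) :
    MemLp (fun ω => linearResidual P W X c ω i) 2 P :=
  (hW i).sub ((memLp_const (c i)).add (memLp_mulVec hX _ i))

lemma crossCov_linearResidual_left_eq_zero (hW : ∀ i, MemLp (fun ω => W ω i) 2 P)
    (hX : ∀ k, MemLp (fun ω => X ω k) 2 P) (hS : IsUnit (crossCov P X X).det) (c : ι → ℝ) :
    crossCov P (linearResidual P W X c) X = 0 := by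
  unfold linearResidual
  rw [crossCov_sub_affine_left hW hX hX, Matrix.mul_assoc,
    nonsing_inv_mul _ hS, Matrix.mul_one, sub_self]

lemma crossCov_linearResidual_right_eq_zero {Y : Ω → ι' → ℝ}
    (hW : ∀ i, MemLp (fun ω => W ω i) 2 P) (hX : ∀ k, MemLp (fun ω => X ω k) 2 P)
    (hY : ∀ j, MemLp (fun ω => Y ω j) 2 P) (hYW : crossCov P Y W = 0)
    (hYX : crossCov P Y X = 0) (c : ι → ℝ) :
    crossCov P Y (linearResidual P W X c) = 0 := by
  unfold linearResidual
  rw [← transpose_crossCov, crossCov_sub_affine_left hW hX hY,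
    ← transpose_crossCov Y W, hYW, ← transpose_crossCov Y X, hYX]
  simp

lemma crossCov_linearResidual_self (hW : ∀ i, MemLp (fun ω => W ω i) 2 P)
    (hX : ∀ k, MemLp (fun ω => X ω k) 2 P) (hS : IsUnit (crossCov P X X).det) (c : ι → ℝ) :
    crossCov P (linearResidual P W X c) (linearResidual P W X c)
      = crossCov P W W - crossCov P W X * (crossCov P X X)⁻¹ * (crossCov P W X)ᵀ := by
  set A := crossCov P W X * (crossCov P X X)⁻¹
  have hR := memLp_linearResidual hW hX c
  calc _ = crossCov P W (linearResidual P W X c) - A * crossCov P X (linearResidual P W X c) :=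
        crossCov_sub_affine_left hW hX hR c A
    _ = (crossCov P W W - A * crossCov P X W)ᵀ := by
      rw [← transpose_crossCov _ X, crossCov_linearResidual_left_eq_zero hW hX hS c,
        transpose_zero, Matrix.mul_zero, sub_zero, ← transpose_crossCov]
      exact congrArg transpose (crossCov_sub_affine_left hW hX hW c A)
    _ = _ := by
      rw [transpose_sub, transpose_crossCov, transpose_mul, transpose_crossCov, transpose_mul,
        transpose_nonsing_inv, transpose_crossCov, Matrix.mul_assoc]

lemma crossCov_add_mulVec_linearResidual [Fintype ι] {E : Ω → ι' → ℝ}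
    (hE : ∀ j, MemLp (fun ω => E ω j) 2 P) (hW : ∀ i, MemLp (fun ω => W ω i) 2 P)
    (hX : ∀ k, MemLp (fun ω => X ω k) 2 P) (hEW : crossCov P E W = 0)
    (hEX : crossCov P E X = 0) (c : ι → ℝ) (M : Matrix ι' ι ℝ) :
    crossCov P (fun ω => E ω + M *ᵥ linearResidual P W X c ω)
        (fun ω => E ω + M *ᵥ linearResidual P W X c ω)
      = crossCov P E E + crossCov P (fun ω => M *ᵥ linearResidual P W X c ω)
          (fun ω => M *ᵥ linearResidual P W X c ω) := by
  have hR := memLp_linearResidual hW hX c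
  refine crossCov_add_self hE (memLp_mulVec hR M) ?_
  rw [crossCov_mulVec_right hE hR, crossCov_linearResidual_right_eq_zero hW hX hE hEW hEX,
    Matrix.zero_mul]

lemma posDef_crossCov_add_mulVec_linearResidual [Fintype ι] [Fintype ι'] {E : Ω → ι' → ℝ}
    (hE : ∀ j, MemLp (fun ω => E ω j) 2 P) (hW : ∀ i, MemLp (fun ω => W ω i) 2 P)
    (hX : ∀ k, MemLp (fun ω => X ω k) 2 P) (hEW : crossCov P E W = 0)
    (hEX : crossCov P E X = 0) (hS : IsUnit (crossCov P X X).det) (c : ι → ℝ)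
    {M : Matrix ι' ι ℝ} (hM : Function.Injective M.vecMul)
    (h : (crossCov P E E).PosDef ∨
      (crossCov P W W - crossCov P W X * (crossCov P X X)⁻¹ * (crossCov P W X)ᵀ).PosDef) :
    (crossCov P (fun ω => E ω + M *ᵥ linearResidual P W X c ω)
      (fun ω => E ω + M *ᵥ linearResidual P W X c ω)).PosDef := by
  have hR := memLp_linearResidual hW hX c
  have hRR := crossCov_linearResidual_self hW hX hS c
  rw [crossCov_add_mulVec_linearResidual hE hW hX hEW hEX, crossCov_mulVec_mulVec hR hR, hRR]
  exact posDef_add_mul_mul_transpose (posSemidef_crossCov_self hE)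
    (hRR ▸ posSemidef_crossCov_self hR) hM h

end LinearResidual

end CrossCov

theorem stmt4_general {Ω : Type*} [MeasurableSpace Ω] (P : Measure Ω) [IsProbabilityMeasure P]
    {d q m : ℕ}
    (y : Ω → Fin d → ℝ) (z : Ω → Fin q → ℝ) (ξ δ x : Ω → Fin m → ℝ)
    (e ε : Ω → Fin d → ℝ)
    (b : Fin d → ℝ) (C : Matrix (Fin q) (Fin d) ℝ) (B : Matrix (Fin m) (Fin d) ℝ)
    (hy : ∀ ω, y ω = b + Cᵀ.mulVec (z ω) + Bᵀ.mulVec (ξ ω) + e ω + ε ω)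
    (hx : ∀ ω, x ω = ξ ω + δ ω)
    (hindep₂ : ProbabilityTheory.IndepFun ξ (fun ω => (e ω, ε ω, δ ω)) P)
    (hindep₃ : ProbabilityTheory.IndepFun e (fun ω => (ε ω, δ ω)) P)
    (hL2ξ : ∀ i, MeasureTheory.MemLp (fun ω => ξ ω i) 2 P)
    (hL2e : ∀ i, MeasureTheory.MemLp (fun ω => e ω i) 2 P)
    (hL2ε : ∀ i, MeasureTheory.MemLp (fun ω => ε ω i) 2 P)
    (hL2δ : ∀ i, MeasureTheory.MemLp (fun ω => δ ω i) 2 P)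
    (hSx : (vcov P x x).det ≠ 0)
    (hε0 : vmean P ε = 0)
    (μ : Fin m → ℝ)
    (Sεδ : Matrix (Fin d) (Fin m) ℝ) (hSεδ : ∀ i j, Sεδ i j = ∫ ω, ε ω i * δ ω j ∂P)
    -- the representation error and the residual Gaussian parts
    (bx : Fin d → ℝ) (Bx : Matrix (Fin m) (Fin d) ℝ)
    (hbx : bx = b + (Bᵀ * vcov P δ δ * (vcov P x x)⁻¹).mulVec μ
        - (Sεδ * (vcov P x x)⁻¹).mulVec μ)
    (hBx : Bxᵀ = Bᵀ * vcov P ξ ξ * (vcov P x x)⁻¹ + Sεδ * (vcov P x x)⁻¹)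
    (u : Ω → Fin d → ℝ)
    (hu : ∀ ω, u ω = y ω - (bx + Cᵀ.mulVec (z ω) + Bxᵀ.mulVec (x ω)))
    (γ₁ : Ω → Fin m → ℝ) (γ₂ : Ω → Fin d → ℝ)
    -- γ₁ = ξ − E[ξ|x] and γ₂ = ε − E[ε|x], written via the Gaussian conditioning formulas
    (hγ₁ : ∀ ω, γ₁ ω = ξ ω - ((vcov P δ δ * (vcov P x x)⁻¹).mulVec μ
        + (vcov P ξ ξ * (vcov P x x)⁻¹).mulVec (x ω)))
    (hγ₂ : ∀ ω, γ₂ ω = ε ω - (Sεδ * (vcov P x x)⁻¹).mulVec (x ω - μ))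
    -- the matrix V = Σ₁₁ − Σ₁₂ Σ₂₂⁻¹ Σ₁₂ᵀ
    (V : Matrix (Fin m ⊕ Fin d) (Fin m ⊕ Fin d) ℝ)
    (hV : V = Matrix.fromBlocks (vcov P ξ ξ) 0 0 (vcov P ε ε)
        - Matrix.fromRows (vcov P ξ ξ) Sεδ * (vcov P x x)⁻¹
            * (Matrix.fromRows (vcov P ξ ξ) Sεδ)ᵀ) :
    vcov P u u = vcov P e e + vcov P (fun ω => Bᵀ.mulVec (γ₁ ω) + γ₂ ω)
        (fun ω => Bᵀ.mulVec (γ₁ ω) + γ₂ ω)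
      ∧ (((vcov P e e).PosDef ∨ V.PosDef) → (vcov P u u).PosDef) := by
  simp only [vcov_eq_crossCov] at hbx hBx hγ₁ hγ₂ hV ⊢
  have hxξδ : x = fun ω => ξ ω + δ ω := funext hx
  obtain rfl : Sεδ = crossCov P ε δ := by
    ext i j
    rw [hSεδ, crossCov_apply_of_integral_eq_zero_left (hL2ε i) (hL2δ j) (congrFun hε0 i)]
  set W : Ω → Fin m ⊕ Fin d → ℝ := fun ω => Sum.elim (ξ ω) (ε ω)
  have hL2x : ∀ i, MemLp (fun ω => x ω i) 2 P := hxξδ ▸ fun i => (hL2ξ i).add (hL2δ i)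
  have hL2W : ∀ i, MemLp (fun ω => W ω i) 2 P := Sum.rec hL2ξ hL2ε
  have hξε : IndepFun ξ ε P := hindep₂.comp measurable_id (measurable_fst.comp measurable_snd)
  have hξδ : IndepFun ξ δ P := hindep₂.comp measurable_id (measurable_snd.comp measurable_snd)
  have heξ : IndepFun e ξ P := (hindep₂.comp measurable_id measurable_fst).symm
  have heε : IndepFun e ε P := hindep₃.comp measurable_id measurable_fst
  have heδ : IndepFun e δ P := hindep₃.comp measurable_id measurable_snd
  have heW : crossCov P e W = 0 := by
    rw [crossCov_sumElim_right, heξ.crossCov_eq_zero hL2e hL2ξ, heε.crossCov_eq_zero hL2e hL2ε,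
      fromCols_zero]
  have hex : crossCov P e x = 0 := by
    rw [hxξδ, crossCov_add_right hL2e hL2ξ hL2δ, heξ.crossCov_eq_zero hL2e hL2ξ,
      heδ.crossCov_eq_zero hL2e hL2δ, add_zero]
  have hWx : crossCov P W x = fromRows (crossCov P ξ ξ) (crossCov P ε δ) :=
    hxξδ ▸ crossCov_sumElim_add_of_indepFun hξε hξδ hL2ξ hL2ε hL2δ
  have hVschur : V = crossCov P W W - crossCov P W x * (crossCov P x x)⁻¹ * (crossCov P W x)ᵀ := by
    rw [hV, hWx, ← crossCov_sumElim_self_of_indepFun hξε hL2ξ hL2ε]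
  obtain ⟨c, hγ⟩ : ∃ c, ∀ ω, Sum.elim (γ₁ ω) (γ₂ ω) = linearResidual P W x c ω := by
    refine ⟨Sum.elim ((crossCov P δ δ * (crossCov P x x)⁻¹) *ᵥ μ)
      (-((crossCov P ε δ * (crossCov P x x)⁻¹) *ᵥ μ)), fun ω => ?_⟩
    ext (i | i) <;> simp only [W, linearResidual, hWx, fromRows_mul, fromRows_mulVec, hγ₁, hγ₂,
      mulVec_sub, Sum.elim_inl, Sum.elim_inr, Pi.sub_apply, Pi.add_apply, Pi.neg_apply]
    ring
  have hg : ∀ ω, Bᵀ *ᵥ γ₁ ω + γ₂ ω = fromCols Bᵀ 1 *ᵥ linearResidual P W x c ω := fun ω => by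
    rw [← hγ, fromCols_mulVec_sumElim, one_mulVec]
  have hue : u = fun ω => e ω + fromCols Bᵀ 1 *ᵥ linearResidual P W x c ω := by
    funext ω
    rw [← hg]
    simp only [hu, hy, hγ₁, hγ₂, hbx, hBx, mulVec_add, mulVec_sub, add_mulVec,
      mulVec_mulVec, Matrix.mul_assoc]
    abel
  simp only [hg, hue, hVschur]
  exact ⟨crossCov_add_mulVec_linearResidual hL2e hL2W hL2x heW hex c _,
    posDef_crossCov_add_mulVec_linearResidual hL2e hL2W hL2x heW hex
      (isUnit_iff_ne_zero.mpr hSx) c (vecMul_fromCols_one_injective Bᵀ)⟩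

/-- In the multivariate linear EIV model under assumptions (i)–(iv), the
error `u = y − (bₓ + Cᵀ z + Bₓᵀ x)` of the representation satisfies
`Cov(u) = Σ_e + Cov(Bᵀ γ₁ + γ₂)`, where `γ₁ = ξ − E[ξ|x]`, `γ₂ = ε − E[ε|x]` and
`(γ₁ᵀ, γ₂ᵀ)ᵀ ~ N(0, V)` with `V = Σ₁₁ − Σ₁₂ Σ₂₂⁻¹ Σ₁₂ᵀ`; in particular, if either `Σ_e`
or `V` is positive definite, then `Cov(u)` is positive definite. -/
theorem stmt4 {Ω : Type*} [MeasurableSpace Ω] (P : Measure Ω) [IsProbabilityMeasure P]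
    {d q m : ℕ}
    (y : Ω → Fin d → ℝ) (z : Ω → Fin q → ℝ) (ξ δ x : Ω → Fin m → ℝ)
    (e ε : Ω → Fin d → ℝ)
    (hym : Measurable y) (hzm : Measurable z) (hξm : Measurable ξ)
    (hδm : Measurable δ) (hem : Measurable e) (hεm : Measurable ε)
    (b : Fin d → ℝ) (C : Matrix (Fin q) (Fin d) ℝ) (B : Matrix (Fin m) (Fin d) ℝ)
    (hy : ∀ ω, y ω = b + Cᵀ.mulVec (z ω) + Bᵀ.mulVec (ξ ω) + e ω + ε ω)
    (hx : ∀ ω, x ω = ξ ω + δ ω)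
    (hindep₁ : ProbabilityTheory.IndepFun z (fun ω => (ξ ω, e ω, ε ω, δ ω)) P)
    (hindep₂ : ProbabilityTheory.IndepFun ξ (fun ω => (e ω, ε ω, δ ω)) P)
    (hindep₃ : ProbabilityTheory.IndepFun e (fun ω => (ε ω, δ ω)) P)
    (hL2z : ∀ i, MeasureTheory.MemLp (fun ω => z ω i) 2 P)
    (hL2ξ : ∀ i, MeasureTheory.MemLp (fun ω => ξ ω i) 2 P)
    (hL2e : ∀ i, MeasureTheory.MemLp (fun ω => e ω i) 2 P)
    (hL2ε : ∀ i, MeasureTheory.MemLp (fun ω => ε ω i) 2 P)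
    (hL2δ : ∀ i, MeasureTheory.MemLp (fun ω => δ ω i) 2 P)
    (hSz : (vcov P z z).det ≠ 0) (hSx : (vcov P x x).det ≠ 0)
    (he0 : vmean P e = 0) (hε0 : vmean P ε = 0) (hδ0 : vmean P δ = 0)
    (hGauss : IsGaussianVec P (fun ω => Fin.append (ε ω) (Fin.append (δ ω) (ξ ω))))
    (μ : Fin m → ℝ) (hμ : μ = vmean P x)
    (Sεδ : Matrix (Fin d) (Fin m) ℝ) (hSεδ : ∀ i j, Sεδ i j = ∫ ω, ε ω i * δ ω j ∂P)
    -- the representation error and the residual Gaussian parts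
    (bx : Fin d → ℝ) (Bx : Matrix (Fin m) (Fin d) ℝ)
    (hbx : bx = b + (Bᵀ * vcov P δ δ * (vcov P x x)⁻¹).mulVec μ
        - (Sεδ * (vcov P x x)⁻¹).mulVec μ)
    (hBx : Bxᵀ = Bᵀ * vcov P ξ ξ * (vcov P x x)⁻¹ + Sεδ * (vcov P x x)⁻¹)
    (u : Ω → Fin d → ℝ)
    (hu : ∀ ω, u ω = y ω - (bx + Cᵀ.mulVec (z ω) + Bxᵀ.mulVec (x ω)))
    (γ₁ : Ω → Fin m → ℝ) (γ₂ : Ω → Fin d → ℝ)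
    -- γ₁ = ξ − E[ξ|x] and γ₂ = ε − E[ε|x], written via the Gaussian conditioning formulas
    (hγ₁ : ∀ ω, γ₁ ω = ξ ω - ((vcov P δ δ * (vcov P x x)⁻¹).mulVec μ
        + (vcov P ξ ξ * (vcov P x x)⁻¹).mulVec (x ω)))
    (hγ₂ : ∀ ω, γ₂ ω = ε ω - (Sεδ * (vcov P x x)⁻¹).mulVec (x ω - μ))
    -- the matrix V = Σ₁₁ − Σ₁₂ Σ₂₂⁻¹ Σ₁₂ᵀ
    (V : Matrix (Fin m ⊕ Fin d) (Fin m ⊕ Fin d) ℝ)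
    (hV : V = Matrix.fromBlocks (vcov P ξ ξ) 0 0 (vcov P ε ε)
        - Matrix.fromRows (vcov P ξ ξ) Sεδ * (vcov P x x)⁻¹
            * (Matrix.fromRows (vcov P ξ ξ) Sεδ)ᵀ) :
    vcov P u u = vcov P e e + vcov P (fun ω => Bᵀ.mulVec (γ₁ ω) + γ₂ ω)
        (fun ω => Bᵀ.mulVec (γ₁ ω) + γ₂ ω)
      ∧ (((vcov P e e).PosDef ∨ V.PosDef) → (vcov P u u).PosDef) :=
  stmt4_general P y z ξ δ x e ε b C B hy hx hindep₂ hindep₃ hL2ξ hL2e hL2ε hL2δ hSx hε0 μ Sεδ hSεδ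
    bx Bx hbx hBx u hu γ₁ γ₂ hγ₁ hγ₂ V hV
end
end

section
/- In the univariate linear EIV model with σ_ξ² = 0 (so ξ = μ a.s.), σ_ε² > 0, σ_δ² > 0, and |Corr(ε, δ)| < 1, the error u in the representation y = b_x + c^T z + β_x x + u equals e + ε − σ_{εδ} σ_δ^{-2} δ almost surely, and its variance σ_u² = σ_e² + σ_ε² − σ_{εδ}² σ_δ^{-2} is strictly positive. -/
open MeasureTheory ProbabilityTheory
open scoped NNReal

noncomputable section

/-! With `ξ = μ` a.s. the regressor is `x = μ + δ`, so `βₓ = σεδ / σδ²` is the coefficient of the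
regression of `ε` on `δ` and `u = e + (ε - βₓ δ)` a.s. The two summands are independent, and the
residual `ε - βₓ δ` has variance `σε² - σεδ² / σδ²`, which is positive exactly when
`|Corr(ε, δ)| < 1`. -/

namespace ProbabilityTheory

variable {Ω : Type*} [MeasurableSpace Ω] {μ : Measure Ω} {X Y : Ω → ℝ}

/-- Variance of the least-squares residual of `X` on `Y`. If `Var[Y] = 0` the coefficient is the
junk value `0` and both sides equal `Var[X]`. -/
lemma variance_sub_covariance_div_variance_mul [IsFiniteMeasure μ] (hX : MemLp X 2 μ)
    (hY : MemLp Y 2 μ) :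
    Var[fun ω ↦ X ω - cov[X, Y; μ] / Var[Y; μ] * Y ω; μ]
      = Var[X; μ] - cov[X, Y; μ] ^ 2 / Var[Y; μ] := by
  rw [variance_fun_sub hX (hY.const_mul _), covariance_const_mul_right, variance_const_mul]
  rcases eq_or_ne Var[Y; μ] 0 with hvar | hvar
  · simp [hvar]
  · field_simp
    ring

lemma covariance_eq_integral_mul_of_integral_eq_zero_right [IsProbabilityMeasure μ]
    (hX : MemLp X 2 μ) (hY : MemLp Y 2 μ) (hY0 : ∫ ω, Y ω ∂μ = 0) :
    cov[X, Y; μ] = ∫ ω, X ω * Y ω ∂μ := by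
  simp [covariance_eq_sub hX hY, hY0]

end ProbabilityTheory

theorem stmt6_general {Ω : Type*} [MeasurableSpace Ω] (P : Measure Ω) [IsProbabilityMeasure P]
    {q : ℕ} (y e ε ξ δ x : Ω → ℝ) (z : Ω → Fin q → ℝ)
    (hδm : Measurable δ) (hεm : Measurable ε)
    (b β : ℝ) (c : Fin q → ℝ)
    (hy : ∀ ω, y ω = b + (∑ i, c i * z ω i) + β * ξ ω + e ω + ε ω)
    (hx : ∀ ω, x ω = ξ ω + δ ω)
    -- (i) independence and second moments
    (hindep₃ : ProbabilityTheory.IndepFun e (fun ω => (ε ω, δ ω)) P)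
    (hL2e : MeasureTheory.MemLp e 2 P)
    -- (iii) zero means
    (hδ0 : ∫ ω, δ ω ∂P = 0)
    -- (iv) ε, δ, ξ jointly Gaussian, with ξ degenerate at μ (σξ² = 0)
    (μ : ℝ) (hξconst : ∀ᵐ ω ∂P, ξ ω = μ)
    (σε2 σδ2 σεδ : ℝ)
    (hσε2 : σε2 = ProbabilityTheory.variance ε P) (hσε2pos : 0 < σε2)
    (hσδ2 : σδ2 = ProbabilityTheory.variance δ P) (hσδ2pos : 0 < σδ2)
    (hσεδ : σεδ = ∫ ω, ε ω * δ ω ∂P)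
    (hcorr : σεδ ^ 2 < σε2 * σδ2)
    -- the representation error, with σξ² = 0, σx² = σδ²:
    -- bₓ = b + β μ − σεδ μ / σδ², βₓ = σεδ / σδ²
    (u : Ω → ℝ)
    (hu : ∀ ω, u ω = y ω - ((b + β * μ - σεδ * μ / σδ2)
        + (∑ i, c i * z ω i) + (σεδ / σδ2) * x ω)) :
    (∀ᵐ ω ∂P, u ω = e ω + ε ω - σεδ / σδ2 * δ ω)
      ∧ ProbabilityTheory.variance u P
          = ProbabilityTheory.variance e P + σε2 - σεδ ^ 2 / σδ2
      ∧ 0 < ProbabilityTheory.variance u P := by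
  have hL2ε : MemLp ε 2 P :=
    memLp_two_of_variance_ne_zero hεm.aestronglyMeasurable (hσε2 ▸ hσε2pos.ne')
  have hL2δ : MemLp δ 2 P :=
    memLp_two_of_variance_ne_zero hδm.aestronglyMeasurable (hσδ2 ▸ hσδ2pos.ne')
  have hσεδ_cov : σεδ = cov[ε, δ; P] :=
    hσεδ.trans (covariance_eq_integral_mul_of_integral_eq_zero_right hL2ε hL2δ hδ0).symm
  set r : Ω → ℝ := fun ω ↦ ε ω - σεδ / σδ2 * δ ω with hr
  have hu_ae : ∀ᵐ ω ∂P, u ω = e ω + ε ω - σεδ / σδ2 * δ ω := by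
    filter_upwards [hξconst] with ω hξω
    rw [hu, hy, hx, hξω]
    field_simp
    ring
  have hvar_r : Var[r; P] = σε2 - σεδ ^ 2 / σδ2 := by
    rw [hr, hσε2, hσδ2, hσεδ_cov]
    exact variance_sub_covariance_div_variance_mul hL2ε hL2δ
  have hindep_r : IndepFun e r P :=
    hindep₃.comp measurable_id (measurable_fst.sub (measurable_snd.const_mul _))
  have hu_ae_r : u =ᵐ[P] e + r := hu_ae.mono fun ω h ↦ h.trans (add_sub_assoc _ _ _)
  have hvar_u : Var[u; P] = Var[e; P] + σε2 - σεδ ^ 2 / σδ2 := by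
    have hL2r : MemLp r 2 P := hL2ε.sub (hL2δ.const_mul _)
    rw [variance_congr hu_ae_r, hindep_r.variance_add hL2e hL2r, hvar_r]
    ring
  refine ⟨hu_ae, hvar_u, ?_⟩
  have hresidual_pos : 0 < σε2 - σεδ ^ 2 / σδ2 := sub_pos.2 ((div_lt_iff₀ hσδ2pos).2 hcorr)
  linarith [variance_nonneg e P]

/-- In the univariate linear EIV model `y = b + cᵀ z + β ξ + e + ε`,
`x = ξ + δ`, with `σξ² = 0` (so `ξ = μ` a.s.), `σε² > 0`, `σδ² > 0`, `|Corr(ε,δ)| < 1`,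
the error `u` of the representation `y = bₓ + cᵀ z + βₓ x + u` equals
`e + ε − σεδ σδ⁻² δ` almost surely, and its variance
`σᵤ² = σe² + σε² − σεδ² σδ⁻²` is strictly positive. -/
theorem stmt6 {Ω : Type*} [MeasurableSpace Ω] (P : Measure Ω) [IsProbabilityMeasure P]
    {q : ℕ} (y e ε ξ δ x : Ω → ℝ) (z : Ω → Fin q → ℝ)
    (hym : Measurable y) (hzm : Measurable z) (hξm : Measurable ξ)
    (hδm : Measurable δ) (hem : Measurable e) (hεm : Measurable ε)
    (b β : ℝ) (c : Fin q → ℝ)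
    (hy : ∀ ω, y ω = b + (∑ i, c i * z ω i) + β * ξ ω + e ω + ε ω)
    (hx : ∀ ω, x ω = ξ ω + δ ω)
    -- (i) independence and second moments
    (hindep₁ : ProbabilityTheory.IndepFun z (fun ω => (ξ ω, e ω, ε ω, δ ω)) P)
    (hindep₂ : ProbabilityTheory.IndepFun ξ (fun ω => (e ω, ε ω, δ ω)) P)
    (hindep₃ : ProbabilityTheory.IndepFun e (fun ω => (ε ω, δ ω)) P)
    (hL2z : ∀ i, MeasureTheory.MemLp (fun ω => z ω i) 2 P)
    (hL2e : MeasureTheory.MemLp e 2 P)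
    -- (iii) zero means
    (he0 : ∫ ω, e ω ∂P = 0) (hε0 : ∫ ω, ε ω ∂P = 0) (hδ0 : ∫ ω, δ ω ∂P = 0)
    -- (iv) ε, δ, ξ jointly Gaussian, with ξ degenerate at μ (σξ² = 0)
    (hGauss : IsGaussianVec P (fun ω => ![ε ω, δ ω, ξ ω]))
    (μ : ℝ) (hξconst : ∀ᵐ ω ∂P, ξ ω = μ) (hvarξ : ProbabilityTheory.variance ξ P = 0)
    (σε2 σδ2 σεδ : ℝ)
    (hσε2 : σε2 = ProbabilityTheory.variance ε P) (hσε2pos : 0 < σε2)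
    (hσδ2 : σδ2 = ProbabilityTheory.variance δ P) (hσδ2pos : 0 < σδ2)
    (hσεδ : σεδ = ∫ ω, ε ω * δ ω ∂P)
    (hcorr : σεδ ^ 2 < σε2 * σδ2)
    -- the representation error, with σξ² = 0, σx² = σδ²:
    -- bₓ = b + β μ − σεδ μ / σδ², βₓ = σεδ / σδ²
    (u : Ω → ℝ)
    (hu : ∀ ω, u ω = y ω - ((b + β * μ - σεδ * μ / σδ2)
        + (∑ i, c i * z ω i) + (σεδ / σδ2) * x ω)) :
    (∀ᵐ ω ∂P, u ω = e ω + ε ω - σεδ / σδ2 * δ ω)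
      ∧ ProbabilityTheory.variance u P
          = ProbabilityTheory.variance e P + σε2 - σεδ ^ 2 / σδ2
      ∧ 0 < ProbabilityTheory.variance u P :=
  stmt6_general P y e ε ξ δ x z hδm hεm b β c hy hx hindep₃ hL2e hδ0 μ hξconst σε2 σδ2 σεδ hσε2
    hσε2pos hσδ2 hσδ2pos hσεδ hcorr u hu
end
end

section
/- In the multivariate linear EIV model under assumptions (i)-(iv), the OLS estimators (Ĉ, B̂_x) = S_{rr}^{+} S_{ry} with r = (z^T, x^T)^T converge almost surely, as n → ∞, to (C, B_x), where B_x^T = B^T Σ_ξ Σ_x^{-1} + Σ_{εδ} Σ_x^{-1}; consequently the OLS predictor ỹ_0 = b̂_x + Ĉ^T z_0 + B̂_x^T x_0 converges almost surely to the best predictor ŷ_0 = b_x + C^T z_0 + B_x^T x_0. -/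
/-!
By the strong law of large numbers, the sample means and sample covariances of the i.i.d.
observations converge almost surely to their population counterparts; in particular
`S_rr → Σ_r := Cov(r)` and `S_ry → Cov(r, y)`. Since `z` is independent of `x`, `Σ_r` is block
diagonal with blocks `Σ_z`, `Σ_x`, hence invertible, so eventually `S_rr⁺ = S_rr⁻¹` and the OLS
coefficients converge to `Σ_r⁻¹ Cov(r, y)`. This equals `(C; B_x)` because the residual
`y - Cᵀ z - B_xᵀ x` is uncorrelated with `r`: with `z` since it is a function of `(ξ, e, ε, δ)`
only, and with `x` since `Cov(x, y - Cᵀ z) = Σ_ξ B + Σ_{εδ}ᵀ = Σ_x B_x`. Finally `b_x` is the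
mean of that residual, and the intercept and the predictor converge by continuity.
-/

open MeasureTheory ProbabilityTheory Matrix Filter
open scoped NNReal Topology

noncomputable section
open Classical

/-- Moore–Penrose pseudoinverse of a real square matrix. -/
def moorePenrose {p : ℕ} (A : Matrix (Fin p) (Fin p) ℝ) : Matrix (Fin p) (Fin p) ℝ :=
  if h : ∃ B : Matrix (Fin p) (Fin p) ℝ,
      A * B * A = A ∧ B * A * B = B ∧ (A * B)ᵀ = A * B ∧ (B * A)ᵀ = B * A
  then h.choose else 0

open scoped ENNReal

section Moments

variable {Ω : Type*} [MeasurableSpace Ω] {P : Measure Ω} {k l : ℕ}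

lemma MeasureTheory.MemLp.mulVec {p : ℝ≥0∞} {X : Ω → Fin k → ℝ} (hX : MemLp X p P)
    (A : Matrix (Fin l) (Fin k) ℝ) : MemLp (fun ω => A *ᵥ X ω) p P :=
  MemLp.of_eval fun j => memLp_finsetSum Finset.univ fun i _ => (hX.eval i).const_mul (A j i)

lemma MeasureTheory.Integrable.mulVec {X : Ω → Fin k → ℝ} (hX : Integrable X P)
    (A : Matrix (Fin l) (Fin k) ℝ) : Integrable (fun ω => A *ᵥ X ω) P :=
  memLp_one_iff_integrable.mp ((memLp_one_iff_integrable.mpr hX).mulVec A)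

lemma transpose_vcov (X : Ω → Fin k → ℝ) (Y : Ω → Fin l → ℝ) :
    (vcov P X Y)ᵀ = vcov P Y X := by
  ext i j
  exact covariance_comm _ _

lemma vcov_add_left [IsFiniteMeasure P] {X X' : Ω → Fin k → ℝ} {Y : Ω → Fin l → ℝ}
    (hX : MemLp X 2 P) (hX' : MemLp X' 2 P) (hY : MemLp Y 2 P) :
    vcov P (X + X') Y = vcov P X Y + vcov P X' Y := by
  ext i j
  exact covariance_add_left (hX.eval i) (hX'.eval i) (hY.eval j)

lemma vcov_add_right [IsFiniteMeasure P] {X : Ω → Fin k → ℝ} {Y Y' : Ω → Fin l → ℝ}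
    (hX : MemLp X 2 P) (hY : MemLp Y 2 P) (hY' : MemLp Y' 2 P) :
    vcov P X (Y + Y') = vcov P X Y + vcov P X Y' := by
  ext i j
  exact covariance_add_right (hX.eval i) (hY.eval j) (hY'.eval j)

lemma vcov_sub_right [IsFiniteMeasure P] {X : Ω → Fin k → ℝ} {Y Y' : Ω → Fin l → ℝ}
    (hX : MemLp X 2 P) (hY : MemLp Y 2 P) (hY' : MemLp Y' 2 P) :
    vcov P X (Y - Y') = vcov P X Y - vcov P X Y' := by
  ext i j
  exact covariance_sub_right (hX.eval i) (hY.eval j) (hY'.eval j)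

lemma vcov_const_add_right [IsProbabilityMeasure P] (X : Ω → Fin k → ℝ) {Y : Ω → Fin l → ℝ}
    (hY : Integrable Y P) (c : Fin l → ℝ) :
    vcov P X (fun ω => c + Y ω) = vcov P X Y := by
  ext i j
  exact covariance_const_add_right (hY.eval j) (c j)

lemma vcov_mulVec_right [IsFiniteMeasure P] {X : Ω → Fin k → ℝ} {l' : ℕ}
    {Y : Ω → Fin l → ℝ} (hX : MemLp X 2 P) (hY : MemLp Y 2 P) (A : Matrix (Fin l') (Fin l) ℝ) :
    vcov P X (fun ω => A *ᵥ Y ω) = vcov P X Y * Aᵀ := by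
  ext i j
  rw [Matrix.mul_apply]
  refine (covariance_fun_sum_right (fun t => (hY.eval t).const_mul (A j t)) (hX.eval i)).trans
    (Finset.sum_congr rfl fun t _ => ?_)
  rw [covariance_const_mul_right, mul_comm]
  rfl

lemma vcov_eq_zero_of_indepFun {X : Ω → Fin k → ℝ} {Y : Ω → Fin l → ℝ} (h : IndepFun X Y P)
    (hX : MemLp X 2 P) (hY : MemLp Y 2 P) : vcov P X Y = 0 := by
  ext i j
  exact (h.comp (measurable_pi_apply i) (measurable_pi_apply j)).covariance_eq_zero
    (hX.eval i) (hY.eval j)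

lemma vcov_add_add_of_indepFun [IsFiniteMeasure P] {X Y : Ω → Fin k → ℝ} (h : IndepFun X Y P)
    (hX : MemLp X 2 P) (hY : MemLp Y 2 P) :
    vcov P (X + Y) (X + Y) = vcov P X X + vcov P Y Y := by
  rw [vcov_add_left hX hY (hX.add hY), vcov_add_right hX hX hY, vcov_add_right hY hX hY,
    vcov_eq_zero_of_indepFun h hX hY, vcov_eq_zero_of_indepFun h.symm hY hX]
  abel

lemma vcov_of_vmean_eq_zero {X : Ω → Fin k → ℝ} {Y : Ω → Fin l → ℝ} (hX : vmean P X = 0)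
    (hY : vmean P Y = 0) : vcov P X Y = of fun i j => ∫ ω, X ω i * Y ω j ∂P := by
  ext i j
  simp [vcov, hX, hY]

lemma vmean_add {X Y : Ω → Fin k → ℝ} (hX : Integrable X P) (hY : Integrable Y P) :
    vmean P (X + Y) = vmean P X + vmean P Y :=
  funext fun i => integral_add (hX.eval i) (hY.eval i)

lemma vmean_const [IsProbabilityMeasure P] (c : Fin k → ℝ) : vmean P (fun _ => c) = c :=
  funext fun i => by simp [vmean]

lemma vmean_mulVec {X : Ω → Fin k → ℝ} (hX : Integrable X P) (A : Matrix (Fin l) (Fin k) ℝ) :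
    vmean P (fun ω => A *ᵥ X ω) = A *ᵥ vmean P X := by
  ext j
  simp only [vmean, mulVec, dotProduct]
  rw [integral_finsetSum _ fun i _ => (hX.eval i).const_mul (A j i)]
  simp_rw [integral_const_mul]

lemma inv_vcov_mul_vcov_of_vcov_residual_eq_zero [IsFiniteMeasure P] {W : Ω → Fin k → ℝ}
    {Y : Ω → Fin l → ℝ} (hW : MemLp W 2 P) (hY : MemLp Y 2 P) {M : Matrix (Fin k) (Fin l) ℝ}
    (hdet : (vcov P W W).det ≠ 0) (horth : vcov P W (fun ω => Y ω - Mᵀ *ᵥ W ω) = 0) :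
    (vcov P W W)⁻¹ * vcov P W Y = M := by
  have hfit : Y = (fun ω => Mᵀ *ᵥ W ω) + fun ω => Y ω - Mᵀ *ᵥ W ω := by
    ext ω : 1
    simp
  have hres : MemLp (fun ω => Y ω - Mᵀ *ᵥ W ω) 2 P := hY.sub (hW.mulVec _)
  have hnormal : vcov P W Y = vcov P W W * M := by
    rw [hfit, vcov_add_right hW (hW.mulVec _) hres, vcov_mulVec_right hW hW,
      horth, transpose_transpose, add_zero]
  rw [hnormal, ← Matrix.mul_assoc, nonsing_inv_mul _ (isUnit_iff_ne_zero.mpr hdet),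
    Matrix.one_mul]

end Moments

section Stacking

variable {Ω : Type*} [MeasurableSpace Ω] {P : Measure Ω} {k k' l : ℕ}

-- The rows are η-expanded so that `Fin.append` sees functions: `Matrix` is not reducible, and
-- `Fin.append A A'` would defeat the simp lemmas `Fin.append_left`/`Fin.append_right`.
def appendRows (A : Matrix (Fin k) (Fin l) ℝ) (A' : Matrix (Fin k') (Fin l) ℝ) :
    Matrix (Fin (k + k')) (Fin l) ℝ :=
  of (Fin.append (fun a => A a) (fun a => A' a))

@[simp] lemma appendRows_castAdd (A : Matrix (Fin k) (Fin l) ℝ) (A' : Matrix (Fin k') (Fin l) ℝ)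
    (i : Fin k) (j : Fin l) : appendRows A A' (Fin.castAdd k' i) j = A i j := by
  simp [appendRows]

@[simp] lemma appendRows_natAdd (A : Matrix (Fin k) (Fin l) ℝ) (A' : Matrix (Fin k') (Fin l) ℝ)
    (i : Fin k') (j : Fin l) : appendRows A A' (Fin.natAdd k i) j = A' i j := by
  simp [appendRows]

lemma vcov_finAppend_left (X : Ω → Fin k → ℝ) (X' : Ω → Fin k' → ℝ) (Y : Ω → Fin l → ℝ) :
    vcov P (fun ω => Fin.append (X ω) (X' ω)) Y = appendRows (vcov P X Y) (vcov P X' Y) := by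
  ext i j
  induction i using Fin.addCases <;> simp [vcov, vmean]

lemma vmean_finAppend (X : Ω → Fin k → ℝ) (X' : Ω → Fin k' → ℝ) :
    vmean P (fun ω => Fin.append (X ω) (X' ω)) = Fin.append (vmean P X) (vmean P X') := by
  ext i
  induction i using Fin.addCases <;> simp [vmean]

lemma memLp_finAppend {p : ℝ≥0∞} {X : Ω → Fin k → ℝ} {X' : Ω → Fin k' → ℝ} (hX : MemLp X p P)
    (hX' : MemLp X' p P) : MemLp (fun ω => Fin.append (X ω) (X' ω)) p P :=
  MemLp.of_eval fun i => by induction i using Fin.addCases <;> simp [hX.eval, hX'.eval]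

lemma vcov_finAppend_finAppend (X : Ω → Fin k → ℝ) (X' : Ω → Fin k' → ℝ) :
    vcov P (fun ω => Fin.append (X ω) (X' ω)) (fun ω => Fin.append (X ω) (X' ω))
      = reindex finSumFinEquiv finSumFinEquiv
          (fromBlocks (vcov P X X) (vcov P X X') (vcov P X' X) (vcov P X' X')) := by
  ext i j
  induction i using Fin.addCases <;> induction j using Fin.addCases <;> simp [vcov, vmean]

lemma det_vcov_finAppend {X : Ω → Fin k → ℝ} {X' : Ω → Fin k' → ℝ} (h : vcov P X X' = 0) :
    (vcov P (fun ω => Fin.append (X ω) (X' ω)) (fun ω => Fin.append (X ω) (X' ω))).det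
      = (vcov P X X).det * (vcov P X' X').det := by
  rw [vcov_finAppend_finAppend, det_reindex_self, h, det_fromBlocks_zero₁₂]

lemma transpose_appendRows_mulVec_finAppend (A : Matrix (Fin k) (Fin l) ℝ)
    (A' : Matrix (Fin k') (Fin l) ℝ) (u : Fin k → ℝ) (u' : Fin k' → ℝ) :
    (appendRows A A')ᵀ *ᵥ Fin.append u u' = Aᵀ *ᵥ u + A'ᵀ *ᵥ u' := by
  ext j
  simp [mulVec, dotProduct, Fin.sum_univ_add]

lemma Filter.Tendsto.of_appendRows {ι : Type*} {F : Filter ι} {A : ι → Matrix (Fin k) (Fin l) ℝ}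
    {A' : ι → Matrix (Fin k') (Fin l) ℝ} {A₀ : Matrix (Fin k) (Fin l) ℝ}
    {A₀' : Matrix (Fin k') (Fin l) ℝ}
    (h : Tendsto (fun n => appendRows (A n) (A' n)) F (𝓝 (appendRows A₀ A₀'))) :
    Tendsto (fun n => (A n, A' n)) F (𝓝 (A₀, A₀')) := by
  have hsplit : Continuous fun N : Matrix (Fin (k + k')) (Fin l) ℝ =>
      ((of fun i j => N (Fin.castAdd k' i) j : Matrix (Fin k) (Fin l) ℝ),
        (of fun i j => N (Fin.natAdd k i) j : Matrix (Fin k') (Fin l) ℝ)) := by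
    fun_prop
  have h' := (hsplit.tendsto _).comp h
  simp only [Function.comp_def, appendRows_castAdd, appendRows_natAdd] at h'
  exact h'

end Stacking

section PseudoInverse

variable {p : ℕ}

lemma moorePenrose_eq_inv {A : Matrix (Fin p) (Fin p) ℝ} (h : A.det ≠ 0) :
    moorePenrose A = A⁻¹ := by
  have hu : IsUnit A.det := isUnit_iff_ne_zero.mpr h
  have hex : ∃ B : Matrix (Fin p) (Fin p) ℝ,
      A * B * A = A ∧ B * A * B = B ∧ (A * B)ᵀ = A * B ∧ (B * A)ᵀ = B * A :=
    ⟨A⁻¹, by simp [mul_nonsing_inv A hu, nonsing_inv_mul A hu]⟩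
  rw [moorePenrose, dif_pos hex]
  calc hex.choose = A⁻¹ * (A * hex.choose * A) * A⁻¹ := by
        simp only [← Matrix.mul_assoc, nonsing_inv_mul A hu, Matrix.one_mul]
        rw [Matrix.mul_assoc, mul_nonsing_inv A hu, Matrix.mul_one]
    _ = A⁻¹ := by rw [hex.choose_spec.1, nonsing_inv_mul A hu, Matrix.one_mul]

lemma Filter.Tendsto.moorePenrose {ι : Type*} {F : Filter ι} {A : ι → Matrix (Fin p) (Fin p) ℝ}
    {A₀ : Matrix (Fin p) (Fin p) ℝ} (hA : Tendsto A F (𝓝 A₀)) (h₀ : A₀.det ≠ 0) :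
    Tendsto (fun n => _root_.moorePenrose (A n)) F (𝓝 A₀⁻¹) := by
  have hdet : Tendsto (fun n => (A n).det) F (𝓝 A₀.det) :=
    (continuous_id.matrix_det.tendsto A₀).comp hA
  have hinv : ContinuousAt Inv.inv A₀ :=
    continuousAt_matrix_inv A₀ (by simpa [Ring.inverse_eq_inv'] using continuousAt_inv₀ h₀)
  refine (hinv.tendsto.comp hA).congr' ?_
  filter_upwards [hdet.eventually_ne h₀] with n hn
  exact (moorePenrose_eq_inv hn).symm

end PseudoInverse

section SampleStatistics

variable {k k' l : ℕ}

def sampleMean (X : ℕ → Fin k → ℝ) (n : ℕ) : Fin k → ℝ :=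
  fun j => (∑ i ∈ Finset.range n, X i j) / n

def sampleCov (X : ℕ → Fin k → ℝ) (Y : ℕ → Fin l → ℝ) (n : ℕ) : Matrix (Fin k) (Fin l) ℝ :=
  of fun j j' =>
    (∑ i ∈ Finset.range n, (X i j - sampleMean X n j) * (Y i j' - sampleMean Y n j')) / n

def olsCoef (W : ℕ → Fin k → ℝ) (Y : ℕ → Fin l → ℝ) (n : ℕ) : Matrix (Fin k) (Fin l) ℝ :=
  moorePenrose (sampleCov W W n) * sampleCov W Y n

def olsIntercept (W : ℕ → Fin k → ℝ) (Y : ℕ → Fin l → ℝ) (n : ℕ) : Fin l → ℝ :=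
  sampleMean Y n - (olsCoef W Y n)ᵀ *ᵥ sampleMean W n

lemma sampleCov_apply_of_ne_zero (X : ℕ → Fin k → ℝ) (Y : ℕ → Fin l → ℝ) {n : ℕ} (hn : n ≠ 0)
    (j : Fin k) (j' : Fin l) :
    sampleCov X Y n j j' = (∑ i ∈ Finset.range n, X i j * Y i j') / n
      - sampleMean X n j * sampleMean Y n j' := by
  have hn' : (n : ℝ) ≠ 0 := Nat.cast_ne_zero.mpr hn
  simp only [sampleCov, sampleMean, of_apply, sub_mul, mul_sub, Finset.sum_sub_distrib,
    ← Finset.sum_mul, ← Finset.mul_sum, Finset.sum_const, Finset.card_range, nsmul_eq_mul]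
  field_simp
  ring

lemma ols_estimates_eq {n : ℕ} {r : ℕ → Fin (k + k') → ℝ} {ys : ℕ → Fin l → ℝ}
    {rbar : Fin (k + k') → ℝ} {ybar : Fin l → ℝ} {Srr : Matrix (Fin (k + k')) (Fin (k + k')) ℝ}
    {Sry : Matrix (Fin (k + k')) (Fin l) ℝ} {Chat : Matrix (Fin k) (Fin l) ℝ}
    {Bhat : Matrix (Fin k') (Fin l) ℝ} {bhat : Fin l → ℝ}
    (hrbar : ∀ j, rbar j = (∑ i ∈ Finset.range n, r i j) / n)
    (hybar : ∀ j, ybar j = (∑ i ∈ Finset.range n, ys i j) / n)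
    (hSrr : ∀ j j', Srr j j'
        = (∑ i ∈ Finset.range n, (r i j - rbar j) * (r i j' - rbar j')) / n)
    (hSry : ∀ j j', Sry j j'
        = (∑ i ∈ Finset.range n, (r i j - rbar j) * (ys i j' - ybar j')) / n)
    (hChat : ∀ i j, Chat i j = (moorePenrose Srr * Sry) (Fin.castAdd k' i) j)
    (hBhat : ∀ i j, Bhat i j = (moorePenrose Srr * Sry) (Fin.natAdd k i) j)
    (hbhat : bhat = ybar - Chatᵀ *ᵥ (fun i => rbar (Fin.castAdd k' i))
        - Bhatᵀ *ᵥ (fun i => rbar (Fin.natAdd k i))) :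
    appendRows Chat Bhat = olsCoef r ys n ∧ bhat = olsIntercept r ys n := by
  have hrbar' : rbar = sampleMean r n := funext hrbar
  have hybar' : ybar = sampleMean ys n := funext hybar
  have hcoef : appendRows Chat Bhat = olsCoef r ys n := by
    have hSrr' : Srr = sampleCov r r n := by
      ext j j'
      simp [hSrr, sampleCov, hrbar']
    have hSry' : Sry = sampleCov r ys n := by
      ext j j'
      simp [hSry, sampleCov, hrbar', hybar']
    ext i j
    induction i using Fin.addCases <;> simp [olsCoef, hChat, hBhat, hSrr', hSry']
  refine ⟨hcoef, ?_⟩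
  rw [olsIntercept, ← hcoef, ← hrbar', ← hybar', ← Fin.append_castAdd_natAdd (f := rbar),
    transpose_appendRows_mulVec_finAppend, hbhat]
  abel

end SampleStatistics

section StrongLaw

variable {Ω : Type*} [MeasurableSpace Ω] {P : Measure Ω} {E : Type*} [MeasurableSpace E]
  {Xs : ℕ → Ω → E} {X : Ω → E} {k l : ℕ}

theorem ae_tendsto_average_comp (hident : ∀ i, IdentDistrib (Xs i) X P P)
    (hindep : iIndepFun Xs P) {g : E → ℝ} (hg : Measurable g)
    (hint : Integrable (fun ω => g (X ω)) P) :
    ∀ᵐ ω ∂P, Tendsto (fun n : ℕ => (∑ i ∈ Finset.range n, g (Xs i ω)) / n) atTop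
      (𝓝 (∫ ω, g (X ω) ∂P)) := by
  have hident_g : ∀ i, IdentDistrib (g ∘ Xs i) (g ∘ X) P P := fun i => (hident i).comp hg
  have h := strong_law_ae_real (fun i => g ∘ Xs i) ((hident_g 0).integrable_iff.mpr hint)
    (fun i j hij => (hindep.indepFun hij).comp hg hg)
    (fun i => (hident_g i).trans (hident_g 0).symm)
  rwa [(hident_g 0).integral_eq] at h

theorem ae_tendsto_sampleMean (hident : ∀ i, IdentDistrib (Xs i) X P P)
    (hindep : iIndepFun Xs P) {F : E → Fin k → ℝ} (hF : Measurable F)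
    (hint : Integrable (fun ω => F (X ω)) P) :
    ∀ᵐ ω ∂P, Tendsto (sampleMean fun i => F (Xs i ω)) atTop (𝓝 (vmean P fun ω => F (X ω))) := by
  have h : ∀ᵐ ω ∂P, ∀ j, _ := ae_all_iff.mpr fun j =>
    ae_tendsto_average_comp hident hindep ((measurable_pi_apply j).comp hF) (hint.eval j)
  filter_upwards [h] with ω hω
  exact tendsto_pi_nhds.mpr hω

theorem ae_tendsto_sampleCov [IsProbabilityMeasure P] (hident : ∀ i, IdentDistrib (Xs i) X P P)
    (hindep : iIndepFun Xs P) {F : E → Fin k → ℝ} {G : E → Fin l → ℝ} (hF : Measurable F)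
    (hG : Measurable G) (hFX : MemLp (fun ω => F (X ω)) 2 P)
    (hGX : MemLp (fun ω => G (X ω)) 2 P) :
    ∀ᵐ ω ∂P, Tendsto (sampleCov (fun i => F (Xs i ω)) fun i => G (Xs i ω)) atTop
      (𝓝 (vcov P (fun ω => F (X ω)) fun ω => G (X ω))) := by
  have hprod : ∀ᵐ ω ∂P, ∀ j j', _ := ae_all_iff.mpr fun j => ae_all_iff.mpr fun j' =>
    ae_tendsto_average_comp hident hindep
      (((measurable_pi_apply j).comp hF).mul ((measurable_pi_apply j').comp hG))
      ((hFX.eval j).integrable_mul (hGX.eval j'))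
  filter_upwards [hprod, ae_tendsto_sampleMean hident hindep hF (hFX.integrable one_le_two),
    ae_tendsto_sampleMean hident hindep hG (hGX.integrable one_le_two)] with ω hω hF' hG'
  refine tendsto_pi_nhds.mpr fun j => tendsto_pi_nhds.mpr fun j' => ?_
  rw [show vcov P _ _ j j' = _ from covariance_eq_sub (hFX.eval j) (hGX.eval j')]
  refine ((hω j j').sub ((tendsto_pi_nhds.mp hF' j).mul (tendsto_pi_nhds.mp hG' j'))).congr' ?_
  filter_upwards [eventually_ne_atTop 0] with n hn
  exact (sampleCov_apply_of_ne_zero _ _ hn j j').symm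

theorem ae_tendsto_ols [IsProbabilityMeasure P] (hident : ∀ i, IdentDistrib (Xs i) X P P)
    (hindep : iIndepFun Xs P)
    {F : E → Fin k → ℝ} {G : E → Fin l → ℝ} (hF : Measurable F) (hG : Measurable G)
    (hFX : MemLp (fun ω => F (X ω)) 2 P) (hGX : MemLp (fun ω => G (X ω)) 2 P)
    {M : Matrix (Fin k) (Fin l) ℝ}
    (hdet : (vcov P (fun ω => F (X ω)) fun ω => F (X ω)).det ≠ 0)
    (horth : vcov P (fun ω => F (X ω)) (fun ω => G (X ω) - Mᵀ *ᵥ F (X ω)) = 0) :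
    ∀ᵐ ω ∂P,
      Tendsto (olsCoef (fun i => F (Xs i ω)) fun i => G (Xs i ω)) atTop (𝓝 M) ∧
      Tendsto (olsIntercept (fun i => F (Xs i ω)) fun i => G (Xs i ω)) atTop
        (𝓝 (vmean P (fun ω => G (X ω)) - Mᵀ *ᵥ vmean P fun ω => F (X ω))) := by
  filter_upwards [ae_tendsto_sampleCov hident hindep hF hF hFX hFX,
    ae_tendsto_sampleCov hident hindep hF hG hFX hGX,
    ae_tendsto_sampleMean hident hindep hF (hFX.integrable one_le_two),
    ae_tendsto_sampleMean hident hindep hG (hGX.integrable one_le_two)]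
    with ω hSWW hSWY hW hY
  have hcoef : Tendsto (olsCoef (fun i => F (Xs i ω)) fun i => G (Xs i ω)) atTop (𝓝 M) := by
    rw [← inv_vcov_mul_vcov_of_vcov_residual_eq_zero hFX hGX hdet horth]
    exact ((continuous_fst.matrix_mul continuous_snd).tendsto _).comp
      ((hSWW.moorePenrose hdet).prodMk_nhds hSWY)
  refine ⟨hcoef, hY.sub ?_⟩
  exact ((continuous_fst.matrix_transpose.matrix_mulVec continuous_snd).tendsto _).comp
    (hcoef.prodMk_nhds hW)

end StrongLaw

namespace EIV

variable {Ω : Type*} [MeasurableSpace Ω] {P : Measure Ω} {d q m : ℕ}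
  {y : Ω → Fin d → ℝ} {z : Ω → Fin q → ℝ} {ξ δ x : Ω → Fin m → ℝ} {e ε : Ω → Fin d → ℝ}
  {b : Fin d → ℝ} {C : Matrix (Fin q) (Fin d) ℝ} {B Bx : Matrix (Fin m) (Fin d) ℝ}
  {Sεδ : Matrix (Fin d) (Fin m) ℝ}

lemma vcov_z_x_eq_zero (hx : ∀ ω, x ω = ξ ω + δ ω)
    (hindep₁ : IndepFun z (fun ω => (ξ ω, e ω, ε ω, δ ω)) P) (hz : MemLp z 2 P)
    (hξ : MemLp ξ 2 P) (hδ : MemLp δ 2 P) : vcov P z x = 0 := by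
  have hφ : Measurable fun p : (Fin m → ℝ) × (Fin d → ℝ) × (Fin d → ℝ) × (Fin m → ℝ) =>
      p.1 + p.2.2.2 := by fun_prop
  rw [show x = _ from funext hx]
  exact vcov_eq_zero_of_indepFun (hindep₁.comp measurable_id hφ) hz (hξ.add hδ)

lemma vcov_z_residual_eq_zero
    (hy : ∀ ω, y ω = b + Cᵀ *ᵥ z ω + Bᵀ *ᵥ ξ ω + e ω + ε ω) (hx : ∀ ω, x ω = ξ ω + δ ω)
    (hindep₁ : IndepFun z (fun ω => (ξ ω, e ω, ε ω, δ ω)) P) (hz : MemLp z 2 P)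
    (hy2 : MemLp y 2 P) (hx2 : MemLp x 2 P) :
    vcov P z (fun ω => y ω - (Cᵀ *ᵥ z ω + Bxᵀ *ᵥ x ω)) = 0 := by
  have hres : MemLp (fun ω => y ω - (Cᵀ *ᵥ z ω + Bxᵀ *ᵥ x ω)) 2 P :=
    hy2.sub ((hz.mulVec Cᵀ).add (hx2.mulVec Bxᵀ))
  set φ := fun p : (Fin m → ℝ) × (Fin d → ℝ) × (Fin d → ℝ) × (Fin m → ℝ) =>
    b + Bᵀ *ᵥ p.1 + p.2.1 + p.2.2.1 - Bxᵀ *ᵥ (p.1 + p.2.2.2)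
  have hφ : Measurable φ := by fun_prop
  have hφV : (fun ω => y ω - (Cᵀ *ᵥ z ω + Bxᵀ *ᵥ x ω)) = φ ∘ fun ω => (ξ ω, e ω, ε ω, δ ω) := by
    ext ω : 1
    simp only [φ, Function.comp_apply, hy, hx]
    abel
  rw [hφV] at hres ⊢
  exact vcov_eq_zero_of_indepFun (hindep₁.comp measurable_id hφ) hz hres

lemma vcov_x_x_mul_Bx (hSx : (vcov P x x).det ≠ 0)
    (hBx : Bxᵀ = Bᵀ * vcov P ξ ξ * (vcov P x x)⁻¹ + Sεδ * (vcov P x x)⁻¹) :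
    vcov P x x * Bx = vcov P ξ ξ * B + Sεδᵀ := by
  have hBx' : Bx = (vcov P x x)⁻¹ * (vcov P ξ ξ * B + Sεδᵀ) := by
    rw [← transpose_transpose Bx, hBx]
    simp only [transpose_add, transpose_mul, transpose_nonsing_inv, transpose_vcov,
      transpose_transpose, Matrix.mul_add, Matrix.mul_assoc]
  rw [hBx', ← Matrix.mul_assoc, mul_nonsing_inv _ (isUnit_iff_ne_zero.mpr hSx), Matrix.one_mul]

lemma vcov_x_residual_eq_zero [IsProbabilityMeasure P]
    (hy : ∀ ω, y ω = b + Cᵀ *ᵥ z ω + Bᵀ *ᵥ ξ ω + e ω + ε ω) (hx : ∀ ω, x ω = ξ ω + δ ω)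
    (hindep₂ : IndepFun ξ (fun ω => (e ω, ε ω, δ ω)) P)
    (hindep₃ : IndepFun e (fun ω => (ε ω, δ ω)) P)
    (hξ : MemLp ξ 2 P) (he : MemLp e 2 P) (hε : MemLp ε 2 P) (hδ : MemLp δ 2 P)
    (hε0 : vmean P ε = 0) (hδ0 : vmean P δ = 0)
    (hSεδ : ∀ i j, Sεδ i j = ∫ ω, ε ω i * δ ω j ∂P) (hSx : (vcov P x x).det ≠ 0)
    (hBx : Bxᵀ = Bᵀ * vcov P ξ ξ * (vcov P x x)⁻¹ + Sεδ * (vcov P x x)⁻¹) :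
    vcov P x (fun ω => y ω - (Cᵀ *ᵥ z ω + Bxᵀ *ᵥ x ω)) = 0 := by
  have hxξδ : x = ξ + δ := funext hx
  have hx2 : MemLp x 2 P := hxξδ ▸ hξ.add hδ
  have hξδ : IndepFun ξ δ P := hindep₂.comp measurable_id (measurable_snd.comp measurable_snd)
  have hξe : IndepFun ξ e P := hindep₂.comp measurable_id measurable_fst
  have hξε : IndepFun ξ ε P := hindep₂.comp measurable_id (measurable_fst.comp measurable_snd)
  have heδ : IndepFun e δ P := hindep₃.comp measurable_id measurable_snd
  have h_xξ : vcov P x ξ = vcov P ξ ξ := by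
    rw [hxξδ, vcov_add_left hξ hδ hξ, ← transpose_vcov ξ δ, vcov_eq_zero_of_indepFun hξδ hξ hδ,
      transpose_zero, add_zero]
  have h_xe : vcov P x e = 0 := by
    rw [hxξδ, vcov_add_left hξ hδ he, ← transpose_vcov e δ, vcov_eq_zero_of_indepFun hξe hξ he,
      vcov_eq_zero_of_indepFun heδ he hδ, transpose_zero, add_zero]
  have h_xε : vcov P x ε = Sεδᵀ := by
    rw [hxξδ, vcov_add_left hξ hδ hε, vcov_eq_zero_of_indepFun hξε hξ hε, zero_add,
      vcov_of_vmean_eq_zero hδ0 hε0]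
    ext i j
    simp [hSεδ, mul_comm]
  have hBξ := hξ.mulVec Bᵀ
  have hBxx := hx2.mulVec Bxᵀ
  have hres : (fun ω => y ω - (Cᵀ *ᵥ z ω + Bxᵀ *ᵥ x ω))
      = fun ω => b + ((fun ω => Bᵀ *ᵥ ξ ω) + e + ε - fun ω => Bxᵀ *ᵥ x ω) ω := by
    ext ω : 1
    simp only [hy, Pi.add_apply, Pi.sub_apply]
    abel
  rw [hres, vcov_const_add_right _ (((hBξ.add he).add hε).sub hBxx |>.integrable one_le_two),
    vcov_sub_right hx2 ((hBξ.add he).add hε) hBxx, vcov_add_right hx2 (hBξ.add he) hε,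
    vcov_add_right hx2 hBξ he, vcov_mulVec_right hx2 hξ, vcov_mulVec_right hx2 hx2,
    transpose_transpose, transpose_transpose, h_xξ, h_xe, h_xε, vcov_x_x_mul_Bx hSx hBx]
  abel

lemma memLp_response [IsFiniteMeasure P] {p : ℝ≥0∞}
    (hy : ∀ ω, y ω = b + Cᵀ *ᵥ z ω + Bᵀ *ᵥ ξ ω + e ω + ε ω) (hz : MemLp z p P)
    (hξ : MemLp ξ p P) (he : MemLp e p P) (hε : MemLp ε p P) : MemLp y p P := by
  rw [show y = _ from funext hy]
  exact ((((memLp_const b).add (hz.mulVec Cᵀ)).add (hξ.mulVec Bᵀ)).add he).add hε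

lemma det_vcov_regressor_ne_zero (hx : ∀ ω, x ω = ξ ω + δ ω)
    (hindep₁ : IndepFun z (fun ω => (ξ ω, e ω, ε ω, δ ω)) P) (hz : MemLp z 2 P)
    (hξ : MemLp ξ 2 P) (hδ : MemLp δ 2 P) (hSz : (vcov P z z).det ≠ 0)
    (hSx : (vcov P x x).det ≠ 0) :
    (vcov P (fun ω => Fin.append (z ω) (x ω)) fun ω => Fin.append (z ω) (x ω)).det ≠ 0 := by
  rw [det_vcov_finAppend (vcov_z_x_eq_zero hx hindep₁ hz hξ hδ)]
  exact mul_ne_zero hSz hSx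

lemma vcov_regressor_residual_eq_zero [IsProbabilityMeasure P]
    (hy : ∀ ω, y ω = b + Cᵀ *ᵥ z ω + Bᵀ *ᵥ ξ ω + e ω + ε ω) (hx : ∀ ω, x ω = ξ ω + δ ω)
    (hindep₁ : IndepFun z (fun ω => (ξ ω, e ω, ε ω, δ ω)) P)
    (hindep₂ : IndepFun ξ (fun ω => (e ω, ε ω, δ ω)) P)
    (hindep₃ : IndepFun e (fun ω => (ε ω, δ ω)) P)
    (hz : MemLp z 2 P) (hξ : MemLp ξ 2 P) (he : MemLp e 2 P) (hε : MemLp ε 2 P)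
    (hδ : MemLp δ 2 P) (hε0 : vmean P ε = 0) (hδ0 : vmean P δ = 0)
    (hSεδ : ∀ i j, Sεδ i j = ∫ ω, ε ω i * δ ω j ∂P) (hSx : (vcov P x x).det ≠ 0)
    (hBx : Bxᵀ = Bᵀ * vcov P ξ ξ * (vcov P x x)⁻¹ + Sεδ * (vcov P x x)⁻¹) :
    vcov P (fun ω => Fin.append (z ω) (x ω))
      (fun ω => y ω - (appendRows C Bx)ᵀ *ᵥ Fin.append (z ω) (x ω)) = 0 := by
  have hx2 : MemLp x 2 P := (funext hx : x = ξ + δ) ▸ hξ.add hδ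
  simp only [transpose_appendRows_mulVec_finAppend]
  rw [vcov_finAppend_left,
    vcov_z_residual_eq_zero hy hx hindep₁ hz (memLp_response hy hz hξ he hε) hx2,
    vcov_x_residual_eq_zero hy hx hindep₂ hindep₃ hξ he hε hδ hε0 hδ0 hSεδ hSx hBx]
  ext i j
  induction i using Fin.addCases <;> simp

lemma intercept_eq [IsProbabilityMeasure P]
    (hy : ∀ ω, y ω = b + Cᵀ *ᵥ z ω + Bᵀ *ᵥ ξ ω + e ω + ε ω) (hx : ∀ ω, x ω = ξ ω + δ ω)
    (hindep₂ : IndepFun ξ (fun ω => (e ω, ε ω, δ ω)) P)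
    (hz : Integrable z P) (hξ : MemLp ξ 2 P) (he : Integrable e P) (hε : Integrable ε P)
    (hδ : MemLp δ 2 P) (he0 : vmean P e = 0) (hε0 : vmean P ε = 0) (hδ0 : vmean P δ = 0)
    (hSx : (vcov P x x).det ≠ 0) {μ : Fin m → ℝ} (hμ : μ = vmean P x) {bx : Fin d → ℝ}
    (hbx : bx = b + (Bᵀ * vcov P δ δ * (vcov P x x)⁻¹).mulVec μ
        - (Sεδ * (vcov P x x)⁻¹).mulVec μ)
    (hBx : Bxᵀ = Bᵀ * vcov P ξ ξ * (vcov P x x)⁻¹ + Sεδ * (vcov P x x)⁻¹) :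
    bx = vmean P y - (appendRows C Bx)ᵀ *ᵥ vmean P fun ω => Fin.append (z ω) (x ω) := by
  rw [vmean_finAppend, transpose_appendRows_mulVec_finAppend]
  have hxξδ : x = ξ + δ := funext hx
  have hξ1 := hξ.integrable one_le_two
  have hmx : vmean P x = vmean P ξ := by
    rw [hxξδ, vmean_add hξ1 (hδ.integrable one_le_two), hδ0, add_zero]
  have hmy : vmean P y = b + Cᵀ *ᵥ vmean P z + Bᵀ *ᵥ vmean P ξ := by
    have hysum : y = (fun _ => b) + (fun ω => Cᵀ *ᵥ z ω) + (fun ω => Bᵀ *ᵥ ξ ω) + e + ε :=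
      funext hy
    have hb : Integrable (fun _ => b) P := integrable_const b
    have hCz := hz.mulVec Cᵀ
    have hBξ := hξ1.mulVec Bᵀ
    rw [hysum, vmean_add (((hb.add hCz).add hBξ).add he) hε, vmean_add ((hb.add hCz).add hBξ) he,
      vmean_add (hb.add hCz) hBξ, vmean_add hb hCz, vmean_const, vmean_mulVec hz,
      vmean_mulVec hξ1, he0, hε0, add_zero, add_zero]
  have hcov_x : vcov P x x = vcov P ξ ξ + vcov P δ δ := by
    rw [hxξδ]
    exact vcov_add_add_of_indepFun
      (hindep₂.comp measurable_id (measurable_snd.comp measurable_snd)) hξ hδ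
  have hB : Bᵀ - Bxᵀ = Bᵀ * vcov P δ δ * (vcov P x x)⁻¹ - Sεδ * (vcov P x x)⁻¹ := by
    conv_lhs => rw [← Matrix.mul_one Bᵀ, ← mul_nonsing_inv _ (isUnit_iff_ne_zero.mpr hSx), hBx]
    rw [hcov_x]
    simp only [Matrix.mul_add, Matrix.add_mul, Matrix.mul_assoc]
    abel
  have hBμ := congrArg (· *ᵥ μ) hB
  simp only [sub_mulVec] at hBμ
  rw [hbx, hmy, ← hmx, ← hμ]
  linear_combination -hBμ

end EIV

theorem stmt10_general {Ω : Type*} [MeasurableSpace Ω] (P : Measure Ω) [IsProbabilityMeasure P]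
    {d q m : ℕ}
    (y : Ω → Fin d → ℝ) (z : Ω → Fin q → ℝ) (ξ δ x : Ω → Fin m → ℝ)
    (e ε : Ω → Fin d → ℝ)
    (hym : Measurable y) (hzm : Measurable z) (hξm : Measurable ξ)
    (hδm : Measurable δ)
    (b : Fin d → ℝ) (C : Matrix (Fin q) (Fin d) ℝ) (B : Matrix (Fin m) (Fin d) ℝ)
    (hy : ∀ ω, y ω = b + Cᵀ.mulVec (z ω) + Bᵀ.mulVec (ξ ω) + e ω + ε ω)
    (hx : ∀ ω, x ω = ξ ω + δ ω)
    -- assumptions (i)–(iv)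
    (hindep₁ : ProbabilityTheory.IndepFun z (fun ω => (ξ ω, e ω, ε ω, δ ω)) P)
    (hindep₂ : ProbabilityTheory.IndepFun ξ (fun ω => (e ω, ε ω, δ ω)) P)
    (hindep₃ : ProbabilityTheory.IndepFun e (fun ω => (ε ω, δ ω)) P)
    (hL2z : ∀ i, MeasureTheory.MemLp (fun ω => z ω i) 2 P)
    (hL2ξ : ∀ i, MeasureTheory.MemLp (fun ω => ξ ω i) 2 P)
    (hL2e : ∀ i, MeasureTheory.MemLp (fun ω => e ω i) 2 P)
    (hL2ε : ∀ i, MeasureTheory.MemLp (fun ω => ε ω i) 2 P)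
    (hL2δ : ∀ i, MeasureTheory.MemLp (fun ω => δ ω i) 2 P)
    (hSz : (vcov P z z).det ≠ 0) (hSx : (vcov P x x).det ≠ 0)
    (he0 : vmean P e = 0) (hε0 : vmean P ε = 0) (hδ0 : vmean P δ = 0)
    (μ : Fin m → ℝ) (hμ : μ = vmean P x)
    (Sεδ : Matrix (Fin d) (Fin m) ℝ) (hSεδ : ∀ i j, Sεδ i j = ∫ ω, ε ω i * δ ω j ∂P)
    (bx : Fin d → ℝ) (Bx : Matrix (Fin m) (Fin d) ℝ)
    (hbx : bx = b + (Bᵀ * vcov P δ δ * (vcov P x x)⁻¹).mulVec μ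
        - (Sεδ * (vcov P x x)⁻¹).mulVec μ)
    (hBx : Bxᵀ = Bᵀ * vcov P ξ ξ * (vcov P x x)⁻¹ + Sεδ * (vcov P x x)⁻¹)
    -- i.i.d. copies of the observed triple (y, z, x)
    (ys : ℕ → Ω → Fin d → ℝ) (zs : ℕ → Ω → Fin q → ℝ) (xs : ℕ → Ω → Fin m → ℝ)
    (hmeas : ∀ i, Measurable (fun ω => (ys i ω, zs i ω, xs i ω)))
    (hiid : ∀ i, Measure.map (fun ω => (ys i ω, zs i ω, xs i ω)) P
        = Measure.map (fun ω => (y ω, z ω, x ω)) P)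
    (hindepSeq : ProbabilityTheory.iIndepFun
        (fun i ω => (ys i ω, zs i ω, xs i ω)) P)
    -- the combined regressor rᵢ = (zᵢᵀ, xᵢᵀ)ᵀ and the sample covariance matrices
    (r : ℕ → Ω → Fin (q + m) → ℝ) (hr : ∀ i ω, r i ω = Fin.append (zs i ω) (xs i ω))
    (rbar : ℕ → Ω → Fin (q + m) → ℝ) (ybar : ℕ → Ω → Fin d → ℝ)
    (hrbar : ∀ n ω j, rbar n ω j = (∑ i ∈ Finset.range n, r i ω j) / n)
    (hybar : ∀ n ω j, ybar n ω j = (∑ i ∈ Finset.range n, ys i ω j) / n)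
    (Srr : ℕ → Ω → Matrix (Fin (q + m)) (Fin (q + m)) ℝ)
    (Sry : ℕ → Ω → Matrix (Fin (q + m)) (Fin d) ℝ)
    (hSrr : ∀ n ω j l, Srr n ω j l
        = (∑ i ∈ Finset.range n, (r i ω j - rbar n ω j) * (r i ω l - rbar n ω l)) / n)
    (hSry : ∀ n ω j l, Sry n ω j l
        = (∑ i ∈ Finset.range n, (r i ω j - rbar n ω j) * (ys i ω l - ybar n ω l)) / n)
    -- the OLS estimators (Ĉ; B̂ₓ) = S_rr⁺ S_ry and the intercept estimator b̂ₓ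
    (Chat : ℕ → Ω → Matrix (Fin q) (Fin d) ℝ) (Bxhat : ℕ → Ω → Matrix (Fin m) (Fin d) ℝ)
    (hChat : ∀ n ω (i : Fin q) j,
        Chat n ω i j = (moorePenrose (Srr n ω) * Sry n ω) (Fin.castAdd m i) j)
    (hBxhat : ∀ n ω (i : Fin m) j,
        Bxhat n ω i j = (moorePenrose (Srr n ω) * Sry n ω) (Fin.natAdd q i) j)
    (bxhat : ℕ → Ω → Fin d → ℝ)
    (hbxhat : ∀ n ω, bxhat n ω = ybar n ω
        - (Chat n ω)ᵀ.mulVec (fun i => rbar n ω (Fin.castAdd m i))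
        - (Bxhat n ω)ᵀ.mulVec (fun i => rbar n ω (Fin.natAdd q i)))
    -- the new observation
    (z₀ : Fin q → ℝ) (x₀ : Fin m → ℝ) :
    (∀ᵐ ω ∂P, Tendsto (fun n => (Chat n ω, Bxhat n ω)) atTop (𝓝 (C, Bx)))
      ∧ (∀ᵐ ω ∂P, Tendsto
          (fun n => bxhat n ω + (Chat n ω)ᵀ.mulVec z₀ + (Bxhat n ω)ᵀ.mulVec x₀)
          atTop (𝓝 (bx + Cᵀ.mulVec z₀ + Bxᵀ.mulVec x₀))) := by
  have hz2 : MemLp z 2 P := .of_eval hL2z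
  have hξ2 : MemLp ξ 2 P := .of_eval hL2ξ
  have he2 : MemLp e 2 P := .of_eval hL2e
  have hε2 : MemLp ε 2 P := .of_eval hL2ε
  have hδ2 : MemLp δ 2 P := .of_eval hL2δ
  have hxξδ : x = ξ + δ := funext hx
  set w : Ω → Fin (q + m) → ℝ := fun ω => Fin.append (z ω) (x ω)
  set M := appendRows C Bx
  have hols : ∀ᵐ ω ∂P,
      Tendsto (olsCoef (fun i => r i ω) fun i => ys i ω) atTop (𝓝 M) ∧
      Tendsto (olsIntercept (fun i => r i ω) fun i => ys i ω) atTop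
        (𝓝 (vmean P y - Mᵀ *ᵥ vmean P w)) := by
    rw [show r = _ from funext₂ hr]
    exact ae_tendsto_ols (X := fun ω => (y ω, z ω, x ω))
      (fun i => ⟨(hmeas i).aemeasurable,
        (hym.prodMk (hzm.prodMk (hxξδ ▸ hξm.add hδm))).aemeasurable, hiid i⟩)
      hindepSeq (F := fun p => Fin.append p.2.1 p.2.2) (G := Prod.fst) (by fun_prop)
      measurable_fst (memLp_finAppend hz2 (hxξδ ▸ hξ2.add hδ2))
      (EIV.memLp_response hy hz2 hξ2 he2 hε2)
      (EIV.det_vcov_regressor_ne_zero hx hindep₁ hz2 hξ2 hδ2 hSz hSx)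
      (EIV.vcov_regressor_residual_eq_zero hy hx hindep₁ hindep₂ hindep₃ hz2 hξ2 he2 hε2 hδ2
        hε0 hδ0 hSεδ hSx hBx)
  have hest : ∀ n ω,
      appendRows (Chat n ω) (Bxhat n ω) = olsCoef (fun i => r i ω) (fun i => ys i ω) n ∧
        bxhat n ω = olsIntercept (fun i => r i ω) (fun i => ys i ω) n := fun n ω =>
    ols_estimates_eq (hrbar n ω) (hybar n ω) (hSrr n ω) (hSry n ω) (hChat n ω) (hBxhat n ω)
      (hbxhat n ω)
  have hbx' : bx = vmean P y - Mᵀ *ᵥ vmean P w :=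
    EIV.intercept_eq hy hx hindep₂ (hz2.integrable one_le_two) hξ2 (he2.integrable one_le_two)
      (hε2.integrable one_le_two) hδ2 he0 hε0 hδ0 hSx hμ hbx hBx
  refine ⟨hols.mono fun ω h => (h.1.congr fun n => (hest n ω).1.symm).of_appendRows,
    hols.mono fun ω h => ?_⟩
  simp only [(hest _ ω).2, add_assoc, ← transpose_appendRows_mulVec_finAppend, (hest _ ω).1, hbx']
  exact h.2.add (((continuous_id.matrix_transpose.matrix_mulVec continuous_const).tendsto _).comp
    h.1)

/-- In the multivariate linear EIV model with i.i.d. copies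
`(yᵢ, zᵢ, xᵢ)`, the OLS estimators `(Ĉ, B̂ₓ) = S_rr⁺ S_ry` (with `r = (zᵀ, xᵀ)ᵀ`)
converge a.s. to `(C, Bₓ)` with `Bₓᵀ = Bᵀ Σ_ξ Σₓ⁻¹ + Σ_{εδ} Σₓ⁻¹`, and hence the OLS
predictor `ỹ₀ = b̂ₓ + Ĉᵀ z₀ + B̂ₓᵀ x₀` converges a.s. to the best predictor
`ŷ₀ = bₓ + Cᵀ z₀ + Bₓᵀ x₀`. -/
theorem stmt10 {Ω : Type*} [MeasurableSpace Ω] (P : Measure Ω) [IsProbabilityMeasure P]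
    {d q m : ℕ}
    (y : Ω → Fin d → ℝ) (z : Ω → Fin q → ℝ) (ξ δ x : Ω → Fin m → ℝ)
    (e ε : Ω → Fin d → ℝ)
    (hym : Measurable y) (hzm : Measurable z) (hξm : Measurable ξ)
    (hδm : Measurable δ) (hem : Measurable e) (hεm : Measurable ε)
    (b : Fin d → ℝ) (C : Matrix (Fin q) (Fin d) ℝ) (B : Matrix (Fin m) (Fin d) ℝ)
    (hy : ∀ ω, y ω = b + Cᵀ.mulVec (z ω) + Bᵀ.mulVec (ξ ω) + e ω + ε ω)
    (hx : ∀ ω, x ω = ξ ω + δ ω)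
    -- assumptions (i)–(iv)
    (hindep₁ : ProbabilityTheory.IndepFun z (fun ω => (ξ ω, e ω, ε ω, δ ω)) P)
    (hindep₂ : ProbabilityTheory.IndepFun ξ (fun ω => (e ω, ε ω, δ ω)) P)
    (hindep₃ : ProbabilityTheory.IndepFun e (fun ω => (ε ω, δ ω)) P)
    (hL2z : ∀ i, MeasureTheory.MemLp (fun ω => z ω i) 2 P)
    (hL2ξ : ∀ i, MeasureTheory.MemLp (fun ω => ξ ω i) 2 P)
    (hL2e : ∀ i, MeasureTheory.MemLp (fun ω => e ω i) 2 P)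
    (hL2ε : ∀ i, MeasureTheory.MemLp (fun ω => ε ω i) 2 P)
    (hL2δ : ∀ i, MeasureTheory.MemLp (fun ω => δ ω i) 2 P)
    (hSz : (vcov P z z).det ≠ 0) (hSx : (vcov P x x).det ≠ 0)
    (he0 : vmean P e = 0) (hε0 : vmean P ε = 0) (hδ0 : vmean P δ = 0)
    (hGauss : IsGaussianVec P (fun ω => Fin.append (ε ω) (Fin.append (δ ω) (ξ ω))))
    (μ : Fin m → ℝ) (hμ : μ = vmean P x)
    (Sεδ : Matrix (Fin d) (Fin m) ℝ) (hSεδ : ∀ i j, Sεδ i j = ∫ ω, ε ω i * δ ω j ∂P)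
    (bx : Fin d → ℝ) (Bx : Matrix (Fin m) (Fin d) ℝ)
    (hbx : bx = b + (Bᵀ * vcov P δ δ * (vcov P x x)⁻¹).mulVec μ
        - (Sεδ * (vcov P x x)⁻¹).mulVec μ)
    (hBx : Bxᵀ = Bᵀ * vcov P ξ ξ * (vcov P x x)⁻¹ + Sεδ * (vcov P x x)⁻¹)
    -- i.i.d. copies of the observed triple (y, z, x)
    (ys : ℕ → Ω → Fin d → ℝ) (zs : ℕ → Ω → Fin q → ℝ) (xs : ℕ → Ω → Fin m → ℝ)
    (hmeas : ∀ i, Measurable (fun ω => (ys i ω, zs i ω, xs i ω)))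
    (hiid : ∀ i, Measure.map (fun ω => (ys i ω, zs i ω, xs i ω)) P
        = Measure.map (fun ω => (y ω, z ω, x ω)) P)
    (hindepSeq : ProbabilityTheory.iIndepFun
        (fun i ω => (ys i ω, zs i ω, xs i ω)) P)
    -- the combined regressor rᵢ = (zᵢᵀ, xᵢᵀ)ᵀ and the sample covariance matrices
    (r : ℕ → Ω → Fin (q + m) → ℝ) (hr : ∀ i ω, r i ω = Fin.append (zs i ω) (xs i ω))
    (rbar : ℕ → Ω → Fin (q + m) → ℝ) (ybar : ℕ → Ω → Fin d → ℝ)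
    (hrbar : ∀ n ω j, rbar n ω j = (∑ i ∈ Finset.range n, r i ω j) / n)
    (hybar : ∀ n ω j, ybar n ω j = (∑ i ∈ Finset.range n, ys i ω j) / n)
    (Srr : ℕ → Ω → Matrix (Fin (q + m)) (Fin (q + m)) ℝ)
    (Sry : ℕ → Ω → Matrix (Fin (q + m)) (Fin d) ℝ)
    (hSrr : ∀ n ω j l, Srr n ω j l
        = (∑ i ∈ Finset.range n, (r i ω j - rbar n ω j) * (r i ω l - rbar n ω l)) / n)
    (hSry : ∀ n ω j l, Sry n ω j l
        = (∑ i ∈ Finset.range n, (r i ω j - rbar n ω j) * (ys i ω l - ybar n ω l)) / n)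
    -- the OLS estimators (Ĉ; B̂ₓ) = S_rr⁺ S_ry and the intercept estimator b̂ₓ
    (Chat : ℕ → Ω → Matrix (Fin q) (Fin d) ℝ) (Bxhat : ℕ → Ω → Matrix (Fin m) (Fin d) ℝ)
    (hChat : ∀ n ω (i : Fin q) j,
        Chat n ω i j = (moorePenrose (Srr n ω) * Sry n ω) (Fin.castAdd m i) j)
    (hBxhat : ∀ n ω (i : Fin m) j,
        Bxhat n ω i j = (moorePenrose (Srr n ω) * Sry n ω) (Fin.natAdd q i) j)
    (bxhat : ℕ → Ω → Fin d → ℝ)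
    (hbxhat : ∀ n ω, bxhat n ω = ybar n ω
        - (Chat n ω)ᵀ.mulVec (fun i => rbar n ω (Fin.castAdd m i))
        - (Bxhat n ω)ᵀ.mulVec (fun i => rbar n ω (Fin.natAdd q i)))
    -- the new observation
    (z₀ : Fin q → ℝ) (x₀ : Fin m → ℝ) :
    (∀ᵐ ω ∂P, Tendsto (fun n => (Chat n ω, Bxhat n ω)) atTop (𝓝 (C, Bx)))
      ∧ (∀ᵐ ω ∂P, Tendsto
          (fun n => bxhat n ω + (Chat n ω)ᵀ.mulVec z₀ + (Bxhat n ω)ᵀ.mulVec x₀)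
          atTop (𝓝 (bx + Cᵀ.mulVec z₀ + Bxᵀ.mulVec x₀))) :=
  stmt10_general P y z ξ δ x e ε hym hzm hξm hδm b C B hy hx hindep₁ hindep₂ hindep₃ hL2z hL2ξ hL2e
    hL2ε hL2δ hSz hSx he0 hε0 hδ0 μ hμ Sεδ hSεδ bx Bx hbx hBx ys zs xs hmeas hiid hindepSeq r hr
    rbar ybar hrbar hybar Srr Sry hSrr hSry Chat Bxhat hChat hBxhat bxhat hbxhat z₀ x₀
end
end

section
/- In the exponential EIV model y = β e^{λ ξ} + e, x = ξ + δ, under assumption (e) with λ real, the best predictor is E[y | x] = β_x exp(λ_x x), where λ_x = K λ, β_x = β e^{λ(1−K)μ} exp(λ² K σ_δ²/2), K = σ_ξ²/σ_x², μ = E x. -/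
/-!
Regress `ξ` on the observation `x = ξ + δ`: the residual `γ = ξ - K x` is a linear function of the
jointly Gaussian pair `(ξ, δ)` with `Cov(x, γ) = σξ² - K σx² = 0`, so `γ` is independent of `x`.
Writing `e^{λξ} = e^{Kλx} e^{λγ}` and pulling out the `x`-measurable factor gives
`E[e^{λξ} | x] = e^{Kλx} E[e^{λγ}]`, and `E[e^{λγ}]` is the Gaussian moment generating function of
`γ ~ N((1 - K)μ, K σδ²)`. The error `e` is independent of `x`, so it contributes `E e = 0`.
-/

open MeasureTheory ProbabilityTheory Real
open scoped NNReal

section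

variable {Ω : Type*} {mΩ : MeasurableSpace Ω} {P : Measure Ω}

lemma indepFun_prodMk_of_indepFun_prodMk [IsProbabilityMeasure P] {β : Type*}
    [MeasurableSpace β] {X Y Z : Ω → β} (hX : Measurable X) (hY : Measurable Y)
    (hZ : Measurable Z) (hXYZ : IndepFun X (fun ω ↦ (Y ω, Z ω)) P) (hYZ : IndepFun Y Z P) :
    IndepFun (fun ω ↦ (X ω, Z ω)) Y P := by
  have hf : ∀ i, Measurable (![X, Y, Z] i) := by
    intro i; fin_cases i <;> assumption
  have hiIndep : iIndepFun ![X, Y, Z] P := by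
    rw [iIndepFun_iff_map_fun_eq_pi_map fun i ↦ (hf i).aemeasurable]
    refine (Measure.pi_eq fun s hs ↦ ?_).symm
    rw [Measure.map_apply (measurable_pi_lambda _ hf) (.univ_pi hs), Fin.prod_univ_three]
    simp only [Matrix.cons_val_zero, Matrix.cons_val_one, Matrix.cons_val_two,
      Matrix.tail_cons, Matrix.head_cons, Measure.map_apply hX (hs 0),
      Measure.map_apply hY (hs 1), Measure.map_apply hZ (hs 2)]
    have hset : (fun ω i ↦ ![X, Y, Z] i ω) ⁻¹' Set.univ.pi s
        = X ⁻¹' s 0 ∩ (fun ω ↦ (Y ω, Z ω)) ⁻¹' (s 1 ×ˢ s 2) := by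
      ext ω
      simp [Fin.forall_fin_succ]
    rw [hset, hXYZ.measure_inter_preimage_eq_mul _ _ (hs 0) ((hs 1).prod (hs 2)),
      Set.mk_preimage_prod, hYZ.measure_inter_preimage_eq_mul _ _ (hs 1) (hs 2), mul_assoc]
  exact hiIndep.indepFun_prodMk hf 0 2 1 (by decide) (by decide)

section CondExp

variable {E : Type*} [MeasurableSpace E] [IsFiniteMeasure P] {X : Ω → E} {Z : Ω → ℝ}

lemma condExp_comap_of_indepFun (hX : Measurable X) (hZ : Measurable Z)
    (hXZ : IndepFun X Z P) :
    P[Z | MeasurableSpace.comap X inferInstance] =ᵐ[P] fun _ ↦ P[Z] :=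
  condExp_indep_eq hZ.comap_le hX.comap_le (comap_measurable Z).stronglyMeasurable hXZ.symm

lemma condExp_comp_mul_of_indepFun {f : E → ℝ} (hX : Measurable X) (hZ : Measurable Z)
    (hf : Measurable f) (hXZ : IndepFun X Z P) (hZi : Integrable Z P)
    (hfZ : Integrable (fun ω ↦ f (X ω) * Z ω) P) :
    P[fun ω ↦ f (X ω) * Z ω | MeasurableSpace.comap X inferInstance]
      =ᵐ[P] fun ω ↦ f (X ω) * P[Z] := by
  have hfX : StronglyMeasurable[MeasurableSpace.comap X inferInstance] (f ∘ X) :=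
    (hf.comp (comap_measurable X)).stronglyMeasurable
  filter_upwards [condExp_mul_of_stronglyMeasurable_left hfX hfZ hZi,
    condExp_comap_of_indepFun hX hZ hXZ] with ω hpull hconst
  rw [← hconst]
  exact hpull

end CondExp

section GaussianRegression

variable {ξ δ : Ω → ℝ} {mξ mδ : ℝ} {vξ vδ : ℝ≥0} {K : ℝ}

lemma integrable_exp_mul_of_hasLaw_gaussianReal [IsProbabilityMeasure P]
    (hξ : HasLaw ξ (gaussianReal mξ vξ) P) (t : ℝ) : Integrable (fun ω ↦ exp (t * ξ ω)) P := by
  rw [← mgf_pos_iff, mgf_gaussianReal hξ.map_eq]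
  exact exp_pos _

lemma indepFun_add_sub_mul_add [IsProbabilityMeasure P] (hξ : HasLaw ξ (gaussianReal mξ vξ) P)
    (hδ : HasLaw δ (gaussianReal mδ vδ) P) (hξδ : IndepFun ξ δ P) (hK : K * (vξ + vδ) = vξ) :
    IndepFun (fun ω ↦ ξ ω + δ ω) (fun ω ↦ ξ ω - K * (ξ ω + δ ω)) P := by
  have hξG := hξ.hasGaussianLaw
  have hδG := hδ.hasGaussianLaw
  let L : ℝ × ℝ →L[ℝ] ℝ × ℝ :=
    (ContinuousLinearMap.fst ℝ ℝ ℝ + ContinuousLinearMap.snd ℝ ℝ ℝ).prod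
      (ContinuousLinearMap.fst ℝ ℝ ℝ
        - K • (ContinuousLinearMap.fst ℝ ℝ ℝ + ContinuousLinearMap.snd ℝ ℝ ℝ))
  have hjoint : HasGaussianLaw (fun ω ↦ (ξ ω + δ ω, ξ ω - K * (ξ ω + δ ω))) P :=
    (hξδ.hasGaussianLaw hξG hδG).map_fun L
  refine hjoint.indepFun_of_covariance_eq_zero ?_
  have h2ξ := hξG.memLp_two
  have h2δ := hδG.memLp_two
  have h2x : MemLp (ξ + δ) 2 P := h2ξ.add h2δ
  change cov[ξ + δ, ξ - K • (ξ + δ); P] = 0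
  rw [covariance_sub_right h2x h2ξ (h2x.const_smul K), covariance_smul_right,
    covariance_self (hξ.aemeasurable.add hδ.aemeasurable), covariance_add_left h2ξ h2δ h2ξ,
    covariance_self hξ.aemeasurable, hξδ.symm.covariance_eq_zero h2δ h2ξ,
    hξδ.variance_add h2ξ h2δ, hξ.variance_eq, hδ.variance_eq, variance_id_gaussianReal,
    variance_id_gaussianReal]
  linear_combination -hK

lemma mgf_sub_mul_add (hξ : HasLaw ξ (gaussianReal mξ vξ) P)
    (hδ : HasLaw δ (gaussianReal mδ vδ) P) (hξδ : IndepFun ξ δ P) (hK : K * (vξ + vδ) = vξ)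
    (t : ℝ) :
    mgf (fun ω ↦ ξ ω - K * (ξ ω + δ ω)) P t
      = exp (((1 - K) * mξ - K * mδ) * t + K * vδ * t ^ 2 / 2) := by
  have hsplit : (fun ω ↦ ξ ω - K * (ξ ω + δ ω))
      = (fun ω ↦ (1 - K) * ξ ω) + fun ω ↦ -K * δ ω := by
    ext ω; simp only [Pi.add_apply]; ring
  have hind : IndepFun (fun ω ↦ (1 - K) * ξ ω) (fun ω ↦ -K * δ ω) P :=
    hξδ.comp (measurable_const_mul _) (measurable_const_mul _)
  rw [hsplit, hind.mgf_add' (hξ.aemeasurable.const_mul _).aestronglyMeasurable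
      (hδ.aemeasurable.const_mul _).aestronglyMeasurable, mgf_const_mul, mgf_const_mul,
    mgf_gaussianReal hξ.map_eq, mgf_gaussianReal hδ.map_eq, ← exp_add]
  congr 1
  linear_combination (K - 1) * t ^ 2 / 2 * hK

lemma condExp_exp_mul_of_hasLaw_gaussianReal [IsProbabilityMeasure P] (hξm : Measurable ξ)
    (hδm : Measurable δ) (hξ : HasLaw ξ (gaussianReal mξ vξ) P)
    (hδ : HasLaw δ (gaussianReal mδ vδ) P) (hξδ : IndepFun ξ δ P) (hK : K * (vξ + vδ) = vξ)
    (t : ℝ) :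
    P[fun ω ↦ exp (t * ξ ω) | MeasurableSpace.comap (fun ω ↦ ξ ω + δ ω) inferInstance]
      =ᵐ[P] fun ω ↦ exp (((1 - K) * mξ - K * mδ) * t + K * vδ * t ^ 2 / 2)
        * exp (K * t * (ξ ω + δ ω)) := by
  have hdecomp : (fun ω ↦ exp (t * ξ ω))
      = fun ω ↦ exp (K * t * (ξ ω + δ ω)) * exp (t * (ξ ω - K * (ξ ω + δ ω))) := by
    ext ω; rw [← exp_add]; ring_nf
  have hind : IndepFun (fun ω ↦ ξ ω + δ ω)
      (fun ω ↦ exp (t * (ξ ω - K * (ξ ω + δ ω)))) P :=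
    (indepFun_add_sub_mul_add hξ hδ hξδ hK).comp measurable_id
      (ψ := fun s ↦ exp (t * s)) (by fun_prop)
  have hresid : Integrable (fun ω ↦ exp (t * (ξ ω - K * (ξ ω + δ ω)))) P := by
    rw [← mgf_pos_iff, mgf_sub_mul_add hξ hδ hξδ hK]
    exact exp_pos _
  rw [hdecomp]
  filter_upwards [condExp_comp_mul_of_indepFun (f := fun s ↦ exp (K * t * s)) (by fun_prop)
    (by fun_prop) (by fun_prop) hind hresid
    (hdecomp ▸ integrable_exp_mul_of_hasLaw_gaussianReal hξ t)] with ω hω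
  rw [hω, ← mgf, mgf_sub_mul_add hξ hδ hξδ hK, mul_comm]

end GaussianRegression

end

theorem stmt18_general {Ω : Type*} [MeasurableSpace Ω] (P : Measure Ω) [IsProbabilityMeasure P]
    (ξ e δ x y : Ω → ℝ) (hξm : Measurable ξ) (hem : Measurable e) (hδm : Measurable δ)
    (β lam : ℝ) (mξ : ℝ) (vξ vδ : ℝ≥0)
    (hξ : Measure.map ξ P = gaussianReal mξ vξ)
    (hδ : Measure.map δ P = gaussianReal 0 vδ)
    (hindep : ProbabilityTheory.IndepFun ξ (fun ω => (e ω, δ ω)) P)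
    (hindep' : ProbabilityTheory.IndepFun e δ P)
    (he0 : ∫ ω, e ω ∂P = 0) (heInt : Integrable e P)
    (hy : ∀ ω, y ω = β * Real.exp (lam * ξ ω) + e ω)
    (hx : ∀ ω, x ω = ξ ω + δ ω)
    (μ : ℝ) (hμ : μ = ∫ ω, x ω ∂P)
    (K : ℝ) (hK : K = (vξ : ℝ) / ((vξ : ℝ) + (vδ : ℝ))) :
    P[y | MeasurableSpace.comap x inferInstance]
      =ᵐ[P] fun ω =>
        (β * Real.exp (lam * (1 - K) * μ) * Real.exp (lam ^ 2 * K * (vδ : ℝ) / 2))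
          * Real.exp (K * lam * x ω) := by
  obtain rfl : x = fun ω ↦ ξ ω + δ ω := funext hx
  obtain rfl : y = fun ω ↦ β * exp (lam * ξ ω) + e ω := funext hy
  have hξL : HasLaw ξ (gaussianReal mξ vξ) P := ⟨hξm.aemeasurable, hξ⟩
  have hδL : HasLaw δ (gaussianReal 0 vδ) P := ⟨hδm.aemeasurable, hδ⟩
  have hξδ : IndepFun ξ δ P := hindep.comp measurable_id measurable_snd
  have hxe : IndepFun (fun ω ↦ ξ ω + δ ω) e P :=
    (indepFun_prodMk_of_indepFun_prodMk hξm hem hδm hindep hindep').comp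
      measurable_add measurable_id
  -- if `vξ + vδ = 0` then `K = 0` by the division convention, and both sides vanish
  have hKv : K * (vξ + vδ) = vξ := by
    rcases eq_or_ne ((vξ : ℝ) + vδ) 0 with h | h
    · rw [h, mul_zero]
      linarith [vξ.coe_nonneg, vδ.coe_nonneg]
    · rw [hK, div_mul_cancel₀ _ h]
  have hμξ : μ = mξ := by
    rw [hμ, integral_add hξL.hasGaussianLaw.integrable hδL.hasGaussianLaw.integrable,
      hξL.integral_eq, hδL.integral_eq, integral_id_gaussianReal, integral_id_gaussianReal,
      add_zero]
  let mx := MeasurableSpace.comap (fun ω ↦ ξ ω + δ ω) inferInstance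
  filter_upwards
    [condExp_add (((integrable_exp_mul_of_hasLaw_gaussianReal hξL lam).const_mul β)) heInt mx,
    condExp_smul β (fun ω ↦ exp (lam * ξ ω)) mx,
    condExp_exp_mul_of_hasLaw_gaussianReal hξm hδm hξL hδL hξδ hKv lam,
    condExp_comap_of_indepFun (by fun_prop) hem hxe] with ω hsum hsmul hexp herr
  have hscale : P[fun ω ↦ β * exp (lam * ξ ω) | mx] ω
      = β * P[fun ω ↦ exp (lam * ξ ω) | mx] ω := hsmul
  rw [show (fun ω ↦ β * exp (lam * ξ ω) + e ω) = (fun ω ↦ β * exp (lam * ξ ω)) + e from rfl,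
    hsum, Pi.add_apply, hscale, hexp, herr, he0, hμξ, add_zero]
  simp only [mul_assoc, ← exp_add]
  ring_nf

/-- In the exponential EIV model `y = β e^{λξ} + e`, `x = ξ + δ`, with
`ξ, e, δ` independent, `ξ, δ` Gaussian, `E e = E δ = 0` and `σx² > 0`, the best predictor is
`E[y | x] = β_x exp(λ_x x)` with `λ_x = K λ` and
`β_x = β e^{λ(1−K)μ} exp(λ² K σδ² / 2)`, where `K = σξ²/σx²` and `μ = E x`. -/
theorem stmt18 {Ω : Type*} [MeasurableSpace Ω] (P : Measure Ω) [IsProbabilityMeasure P]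
    (ξ e δ x y : Ω → ℝ) (hξm : Measurable ξ) (hem : Measurable e) (hδm : Measurable δ)
    (β lam : ℝ) (mξ : ℝ) (vξ vδ : ℝ≥0)
    (hξ : Measure.map ξ P = gaussianReal mξ vξ)
    (hδ : Measure.map δ P = gaussianReal 0 vδ)
    (hindep : ProbabilityTheory.IndepFun ξ (fun ω => (e ω, δ ω)) P)
    (hindep' : ProbabilityTheory.IndepFun e δ P)
    (he0 : ∫ ω, e ω ∂P = 0) (heInt : Integrable e P)
    (hy : ∀ ω, y ω = β * Real.exp (lam * ξ ω) + e ω)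
    (hx : ∀ ω, x ω = ξ ω + δ ω)
    (hvx : (0 : ℝ≥0) < vξ + vδ)
    (μ : ℝ) (hμ : μ = ∫ ω, x ω ∂P)
    (K : ℝ) (hK : K = (vξ : ℝ) / ((vξ : ℝ) + (vδ : ℝ))) :
    P[y | MeasurableSpace.comap x inferInstance]
      =ᵐ[P] fun ω =>
        (β * Real.exp (lam * (1 - K) * μ) * Real.exp (lam ^ 2 * K * (vδ : ℝ) / 2))
          * Real.exp (K * lam * x ω) :=
  stmt18_general P ξ e δ x y hξm hem hδm β lam mξ vξ vδ hξ hδ hindep hindep' he0 heInt hy hx μ hμ K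
    hK
end
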